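/- arXiv:0901.3565 — 4 statements merged into one kernel-verified Lean document; each statement's English description precedes it below -/
import Mathlib

section
/- Fix an integer ℓ > 2. Suppose a partition λ is not an (ℓ,0)-JM partition, and let μ be a partition obtained from λ by adding a horizontal ℓ-rim hook or a vertical ℓ-rim hook (that is, λ is obtained from μ by removing a horizontal or vertical removable ℓ-rim hook of μ). Then μ is not an (ℓ,0)-JM partition. -/
noncomputable section

/-!
Common combinatorial definitions: partitions (English notation, rows indexed from 1),
Young diagrams, hooks, rim hooks, ladders, residues, crystal operators (classical and
ladder versions), locked boxes, regularization classes, dominance order.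
-/

structure YPartition where
  part : ℕ → ℕ
  zero_at_zero : part 0 = 0
  antitone : ∀ i j : ℕ, 1 ≤ i → i ≤ j → part j ≤ part i
  eventually_zero : ∃ N : ℕ, ∀ i : ℕ, N ≤ i → part i = 0

namespace YPartition

/-- The set of boxes of the Young diagram of `μ` (row, column), both indices ≥ 1. -/
def cells (μ : YPartition) : Set (ℕ × ℕ) :=
  {p | 1 ≤ p.1 ∧ 1 ≤ p.2 ∧ p.2 ≤ μ.part p.1}

/-- The length of column `b`: the number of rows containing a box in column `b`. -/
def colLen (μ : YPartition) (b : ℕ) : ℕ :=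
  Nat.card {a : ℕ | 1 ≤ a ∧ b ≤ μ.part a}

/-- The arm of box `(a,b)`: boxes strictly to its right in its row. -/
def arm (μ : YPartition) (a b : ℕ) : ℕ := μ.part a - b

/-- The leg of box `(a,b)`: boxes strictly below it in its column. -/
def leg (μ : YPartition) (a b : ℕ) : ℕ := μ.colLen b - a

/-- The hook length of the box `(a,b)`: arm + leg + 1. -/
def hook (μ : YPartition) (a b : ℕ) : ℕ := (μ.part a - b) + (μ.colLen b - a) + 1

/-- The number of boxes of `μ`. -/
def size (μ : YPartition) : ℕ := μ.cells.ncard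

/-- The number of (nonzero) parts of `μ`. -/
def length (μ : YPartition) : ℕ := μ.colLen 1

/-- `μ` is an `(ℓ,0)`-JM partition: there are no boxes `(a,b)`, `(a,y)`, `(x,b)` with
`ℓ ∣ hook (a,b)` while `ℓ` divides neither `hook (a,y)` nor `hook (x,b)`. -/
def IsJM (ℓ : ℕ) (μ : YPartition) : Prop :=
  ¬ ∃ a b y x : ℕ, (a, b) ∈ μ.cells ∧ (a, y) ∈ μ.cells ∧ (x, b) ∈ μ.cells ∧
    ℓ ∣ μ.hook a b ∧ ¬ ℓ ∣ μ.hook a y ∧ ¬ ℓ ∣ μ.hook x b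

/-- Two boxes share an edge. -/
def BoxAdjacent (p q : ℕ × ℕ) : Prop :=
  (p.1 = q.1 ∧ (p.2 + 1 = q.2 ∨ q.2 + 1 = p.2)) ∨
  (p.2 = q.2 ∧ (p.1 + 1 = q.1 ∨ q.1 + 1 = p.1))

/-- A set of boxes is connected (via shared edges, inside the set). -/
def SetConnected (S : Set (ℕ × ℕ)) : Prop :=
  ∀ p ∈ S, ∀ q ∈ S,
    Relation.ReflTransGen (fun x y => x ∈ S ∧ y ∈ S ∧ BoxAdjacent x y) p q

/-- `S` contains no 2 × 2 square of boxes. -/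
def HasNoSquare (S : Set (ℕ × ℕ)) : Prop :=
  ¬ ∃ a b : ℕ, (a, b) ∈ S ∧ (a + 1, b) ∈ S ∧ (a, b + 1) ∈ S ∧ (a + 1, b + 1) ∈ S

/-- `S` is a removable `ℓ`-rim hook of `μ`: a connected set of `ℓ` boxes of `μ` with no
2 × 2 square whose removal leaves the Young diagram of a partition. -/
def IsRimHook (ℓ : ℕ) (μ : YPartition) (S : Set (ℕ × ℕ)) : Prop :=
  S ⊆ μ.cells ∧ S.ncard = ℓ ∧ SetConnected S ∧ HasNoSquare S ∧
    ∃ ν : YPartition, ν.cells = μ.cells \ S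

/-- `S` is contained in a single row. -/
def HorizontalHook (S : Set (ℕ × ℕ)) : Prop := ∃ a : ℕ, ∀ p ∈ S, p.1 = a

/-- `S` is contained in a single column. -/
def VerticalHook (S : Set (ℕ × ℕ)) : Prop := ∃ b : ℕ, ∀ p ∈ S, p.2 = b

/-- Two sets of boxes are adjacent when some box of one shares an edge with a box of the other. -/
def SetsAdjacent (R S : Set (ℕ × ℕ)) : Prop := ∃ p ∈ R, ∃ q ∈ S, BoxAdjacent p q

/-- An `ℓ`-core: a partition with no removable `ℓ`-rim hook. -/
def IsCore (ℓ : ℕ) (μ : YPartition) : Prop := ¬ ∃ S : Set (ℕ × ℕ), IsRimHook ℓ μ S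

/-- `p` and `q` lie on the same ladder: going down one column step the row increases
by `ℓ - 1`. -/
def SameLadder (ℓ : ℕ) (p q : ℕ × ℕ) : Prop :=
  (q.1 : ℤ) - (p.1 : ℤ) = ((ℓ : ℤ) - 1) * ((p.2 : ℤ) - (q.2 : ℤ))

/-- The index of the ladder through `p`: the ladder through `(k,1)` has index `k`. -/
def ladderIdx (ℓ : ℕ) (p : ℕ × ℕ) : ℕ := p.1 + (ℓ - 1) * (p.2 - 1)

/-- The residue of position `(a,b)` is `b - a` mod `ℓ`. -/
def res (ℓ : ℕ) (p : ℕ × ℕ) : ℕ := (((p.2 : ℤ) - (p.1 : ℤ)) % (ℓ : ℤ)).toNat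

/-- `p` is a removable box of `μ`. -/
def Removable (μ : YPartition) (p : ℕ × ℕ) : Prop :=
  1 ≤ p.1 ∧ p.2 = μ.part p.1 ∧ μ.part (p.1 + 1) < p.2

/-- `p` is an addable box of `μ`. -/
def Addable (μ : YPartition) (p : ℕ × ℕ) : Prop :=
  1 ≤ p.1 ∧ p.2 = μ.part p.1 + 1 ∧ (p.1 = 1 ∨ p.2 ≤ μ.part (p.1 - 1))

/-- The removable `i`-boxes of `μ`. -/
def RemovableRes (ℓ i : ℕ) (μ : YPartition) : Set (ℕ × ℕ) :=
  {p | Removable μ p ∧ res ℓ p = i}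

/-- The addable `i`-boxes of `μ`. -/
def AddableRes (ℓ i : ℕ) (μ : YPartition) : Set (ℕ × ℕ) :=
  {p | Addable μ p ∧ res ℓ p = i}

/-- Ladder reading order (reflexive): ladders left to right, top to bottom within a ladder.
`LadderLE ℓ p q` means `p` is read before (or equal to) `q`. -/
def LadderLE (ℓ : ℕ) (p q : ℕ × ℕ) : Prop :=
  ladderIdx ℓ p < ladderIdx ℓ q ∨ (ladderIdx ℓ p = ladderIdx ℓ q ∧ p.1 ≤ q.1)

/-- Strict ladder reading order. -/
def LadderLT (ℓ : ℕ) (p q : ℕ × ℕ) : Prop :=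
  ladderIdx ℓ p < ladderIdx ℓ q ∨ (ladderIdx ℓ p = ladderIdx ℓ q ∧ p.1 < q.1)

/-- Classical reading order (reflexive): rows from bottom to top.
`RowLE p q` means `p` is read before (or equal to) `q`. -/
def RowLE (p q : ℕ × ℕ) : Prop := q.1 ≤ p.1

/-- Given a reading order `le`, a set `Rem` of `-` marks and `Add` of `+` marks, a `-` at `p`
survives the cancellation of adjacent `-+` pairs iff every interval of the reading word
starting at `p` contains strictly more `-`'s than `+`'s. -/
def NormalIn (le : ℕ × ℕ → ℕ × ℕ → Prop) (Rem Add : Set (ℕ × ℕ)) (p : ℕ × ℕ) : Prop :=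
  p ∈ Rem ∧ ∀ q ∈ Rem ∪ Add, le p q →
    (Add ∩ {s | le p s ∧ le s q}).ncard < (Rem ∩ {s | le p s ∧ le s q}).ncard

/-- A `+` at `q` survives the cancellation of adjacent `-+` pairs iff every interval of the
reading word ending at `q` contains strictly more `+`'s than `-`'s. -/
def ConormalIn (le : ℕ × ℕ → ℕ × ℕ → Prop) (Rem Add : Set (ℕ × ℕ)) (q : ℕ × ℕ) : Prop :=
  q ∈ Add ∧ ∀ p ∈ Rem ∪ Add, le p q →
    (Rem ∩ {s | le p s ∧ le s q}).ncard < (Add ∩ {s | le p s ∧ le s q}).ncard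

/-- Ladder normal `i`-box. -/
def LadderNormal (ℓ i : ℕ) (μ : YPartition) (p : ℕ × ℕ) : Prop :=
  NormalIn (LadderLE ℓ) (RemovableRes ℓ i μ) (AddableRes ℓ i μ) p

/-- Ladder conormal `i`-box. -/
def LadderConormal (ℓ i : ℕ) (μ : YPartition) (p : ℕ × ℕ) : Prop :=
  ConormalIn (LadderLE ℓ) (RemovableRes ℓ i μ) (AddableRes ℓ i μ) p

/-- Normal `i`-box (classical signature). -/
def ClassNormal (ℓ i : ℕ) (μ : YPartition) (p : ℕ × ℕ) : Prop :=
  NormalIn RowLE (RemovableRes ℓ i μ) (AddableRes ℓ i μ) p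

/-- Conormal `i`-box (classical signature). -/
def ClassConormal (ℓ i : ℕ) (μ : YPartition) (p : ℕ × ℕ) : Prop :=
  ConormalIn RowLE (RemovableRes ℓ i μ) (AddableRes ℓ i μ) p

/-- `ε̂_i(μ)`: number of ladder normal `i`-boxes. -/
def hatEps (ℓ i : ℕ) (μ : YPartition) : ℕ := {p | LadderNormal ℓ i μ p}.ncard

/-- `φ̂_i(μ)`: number of ladder conormal `i`-boxes. -/
def hatPhi (ℓ i : ℕ) (μ : YPartition) : ℕ := {p | LadderConormal ℓ i μ p}.ncard

/-- `ε_i(μ)`: number of normal `i`-boxes. -/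
def eps (ℓ i : ℕ) (μ : YPartition) : ℕ := {p | ClassNormal ℓ i μ p}.ncard

/-- `φ_i(μ)`: number of conormal `i`-boxes. -/
def phi (ℓ i : ℕ) (μ : YPartition) : ℕ := {p | ClassConormal ℓ i μ p}.ncard

/-- The ladder good `i`-box: the leftmost `-` of the reduced ladder `i`-signature. -/
def LadderGood (ℓ i : ℕ) (μ : YPartition) (p : ℕ × ℕ) : Prop :=
  LadderNormal ℓ i μ p ∧ ∀ q, LadderNormal ℓ i μ q → LadderLE ℓ p q

/-- The ladder cogood `i`-box: the rightmost `+` of the reduced ladder `i`-signature. -/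
def LadderCogood (ℓ i : ℕ) (μ : YPartition) (p : ℕ × ℕ) : Prop :=
  LadderConormal ℓ i μ p ∧ ∀ q, LadderConormal ℓ i μ q → LadderLE ℓ q p

/-- The good `i`-box (classical). -/
def ClassGood (ℓ i : ℕ) (μ : YPartition) (p : ℕ × ℕ) : Prop :=
  ClassNormal ℓ i μ p ∧ ∀ q, ClassNormal ℓ i μ q → RowLE p q

/-- The cogood `i`-box (classical). -/
def ClassCogood (ℓ i : ℕ) (μ : YPartition) (p : ℕ × ℕ) : Prop :=
  ClassConormal ℓ i μ p ∧ ∀ q, ClassConormal ℓ i μ q → RowLE q p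

/-- The ladder crystal operator `f̂_i` as a relation: `mu = f̂_i lam ≠ 0`. -/
def HatF (ℓ i : ℕ) (lam mu : YPartition) : Prop :=
  ∃ p, LadderCogood ℓ i lam p ∧ mu.cells = insert p lam.cells

/-- The ladder crystal operator `ê_i` as a relation: `mu = ê_i lam ≠ 0`. -/
def HatE (ℓ i : ℕ) (lam mu : YPartition) : Prop :=
  ∃ p, LadderGood ℓ i lam p ∧ mu.cells = lam.cells \ {p}

/-- The classical crystal operator `f̃_i` as a relation: `mu = f̃_i lam ≠ 0`. -/
def TildeF (ℓ i : ℕ) (lam mu : YPartition) : Prop :=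
  ∃ p, ClassCogood ℓ i lam p ∧ mu.cells = insert p lam.cells

/-- The classical crystal operator `ẽ_i` as a relation: `mu = ẽ_i lam ≠ 0`. -/
def TildeE (ℓ i : ℕ) (lam mu : YPartition) : Prop :=
  ∃ p, ClassGood ℓ i lam p ∧ mu.cells = lam.cells \ {p}

/-- `n`-fold composition of a relation. -/
def RelIter {α : Type} (r : α → α → Prop) : ℕ → α → α → Prop
  | 0 => fun a b => a = b
  | n + 1 => fun a b => ∃ c, r a c ∧ RelIter r n c b

/-- The empty partition. -/
def emptyP : YPartition where
  part := fun _ => 0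
  zero_at_zero := rfl
  antitone := fun _ _ _ _ => le_rfl
  eventually_zero := ⟨0, fun _ _ => rfl⟩

/-- `μ` is a node of the ladder crystal `B(Λ₀)^L`: it is obtained from the empty
partition by finitely many applications of the operators `f̂_i`, `0 ≤ i < ℓ`. -/
def LadderNode (ℓ : ℕ) (μ : YPartition) : Prop :=
  Relation.ReflTransGen (fun a b => ∃ i : ℕ, i < ℓ ∧ HatF ℓ i a b) emptyP μ

/-- The type I locking condition at `(a,b)`: every unoccupied position on the ladder of
`(a,b)` lying below it has an unoccupied position directly above it. -/
def LadderClear (ℓ : ℕ) (μ : YPartition) (a b : ℕ) : Prop :=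
  ∀ c d : ℕ, 1 ≤ c → 1 ≤ d → SameLadder ℓ (a, b) (c, d) → a < c →
    (c, d) ∉ μ.cells → (c - 1, d) ∉ μ.cells

/-- Locked boxes of `μ`. -/
inductive Locked (ℓ : ℕ) (μ : YPartition) : ℕ × ℕ → Prop where
  | typeI_top : ∀ b : ℕ, (1, b) ∈ μ.cells → LadderClear ℓ μ 1 b → Locked ℓ μ (1, b)
  | typeI_up : ∀ a b : ℕ, (a + 1, b) ∈ μ.cells → Locked ℓ μ (a, b) →
      LadderClear ℓ μ (a + 1) b → Locked ℓ μ (a + 1, b)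
  | typeII : ∀ a b b' : ℕ, (a, b) ∈ μ.cells → b < b' → Locked ℓ μ (a, b') → Locked ℓ μ (a, b)

/-- Number of boxes of `μ` on the `k`-th ladder. -/
def ladderCount (ℓ : ℕ) (μ : YPartition) (k : ℕ) : ℕ :=
  (μ.cells ∩ {p | ladderIdx ℓ p = k}).ncard

/-- `lam` and `mu` lie in the same regularization class: they have the same number of
boxes on every ladder. -/
def SameRegClass (ℓ : ℕ) (lam mu : YPartition) : Prop :=
  ∀ k : ℕ, ladderCount ℓ lam k = ladderCount ℓ mu k

/-- The boxes of `μ` are top-justified on each ladder. -/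
def TopJustified (ℓ : ℕ) (μ : YPartition) : Prop :=
  ∀ p ∈ μ.cells, ∀ q : ℕ × ℕ, 1 ≤ q.1 → 1 ≤ q.2 →
    ladderIdx ℓ q = ladderIdx ℓ p → q.1 < p.1 → q ∈ μ.cells

/-- `mu = R lam`: the regularization of `lam`, obtained by moving every box of `lam` to
the topmost unoccupied positions of its ladder. -/
def IsRegularization (ℓ : ℕ) (lam mu : YPartition) : Prop :=
  SameRegClass ℓ lam mu ∧ TopJustified ℓ mu

/-- Dominance order on partitions. -/
def DomLE (lam mu : YPartition) : Prop :=
  ∀ j : ℕ, ∑ i ∈ Finset.Icc 1 j, lam.part i ≤ ∑ i ∈ Finset.Icc 1 j, mu.part i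

/-- All (positive) positions on the `k`-th ladder. -/
def LadderPositions (ℓ k : ℕ) : Set (ℕ × ℕ) :=
  {p | 1 ≤ p.1 ∧ 1 ≤ p.2 ∧ ladderIdx ℓ p = k}

/-- The set of locked boxes of `μ`. -/
def lockedCells (ℓ : ℕ) (μ : YPartition) : Set (ℕ × ℕ) := {p | Locked ℓ μ p}

/-- The number of unlocked boxes of `μ` on the `k`-th ladder. -/
def unlockedCount (ℓ : ℕ) (μ : YPartition) (k : ℕ) : ℕ :=
  ((μ.cells ∩ LadderPositions ℓ k) \ lockedCells ℓ μ).ncard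

/-- The diagram `S μ`: locked boxes stay put, and on each ladder the unlocked boxes are
moved into the lowest positions of that ladder not occupied by locked boxes. -/
def SCells (ℓ : ℕ) (μ : YPartition) : Set (ℕ × ℕ) :=
  lockedCells ℓ μ ∪
    {p | 1 ≤ p.1 ∧ 1 ≤ p.2 ∧ p ∉ lockedCells ℓ μ ∧
      ((LadderPositions ℓ (ladderIdx ℓ p) ∩ {q | p.1 < q.1}) \ lockedCells ℓ μ).ncard
        < unlockedCount ℓ μ (ladderIdx ℓ p)}

/-- `μ` is `ℓ`-regular: no part occurs `ℓ` or more times. -/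
def IsRegular (ℓ : ℕ) (μ : YPartition) : Prop :=
  ∀ a : ℕ, 1 ≤ a → 0 < μ.part (a + (ℓ - 1)) → μ.part (a + (ℓ - 1)) < μ.part a

/-- Removal of a single horizontal or vertical `ℓ`-rim hook. -/
def RemoveHV (ℓ : ℕ) (lam mu : YPartition) : Prop :=
  ∃ S : Set (ℕ × ℕ), IsRimHook ℓ lam S ∧ (HorizontalHook S ∨ VerticalHook S) ∧
    mu.cells = lam.cells \ S

/-- Condition (1): every removable `ℓ`-rim hook is horizontal or vertical. -/
def Cond1 (ℓ : ℕ) (μ : YPartition) : Prop :=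
  ∀ S : Set (ℕ × ℕ), IsRimHook ℓ μ S → HorizontalHook S ∨ VerticalHook S

/-- Condition (2): no vertical (resp. horizontal) `ℓ`-rim hook `R` of `μ` together with an
adjacent horizontal (resp. vertical) `ℓ`-rim hook `S` of `μ \ R` . -/
def Cond2 (ℓ : ℕ) (μ : YPartition) : Prop :=
  ¬ ∃ (R S : Set (ℕ × ℕ)) (ν : YPartition), IsRimHook ℓ μ R ∧ ν.cells = μ.cells \ R ∧
    IsRimHook ℓ ν S ∧ SetsAdjacent R S ∧
    ((VerticalHook R ∧ HorizontalHook S) ∨ (HorizontalHook R ∧ VerticalHook S))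

/-- A generalized `ℓ`-partition: conditions (1) and (2) hold after removing any sequence of
horizontal and vertical `ℓ`-rim hooks (including the empty sequence). -/
def IsGenLPartition (ℓ : ℕ) (lam : YPartition) : Prop :=
  ∀ mu : YPartition, Relation.ReflTransGen (RemoveHV ℓ) lam mu → Cond1 ℓ mu ∧ Cond2 ℓ mu

/-- The `t`-th row (from the top) of the bottom block of the decomposition
`(μ, r, s, ρ, σ)`: the number of values `v ∈ [1, s+1]` whose column block still reaches
row `t`; column block `v` consists of `σ_v·ℓ + (s+1−v)(ℓ−1)` rows of length `≥ v`. -/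
def bottomPart (ℓ s : ℕ) (σ : YPartition) (t : ℕ) : ℕ :=
  ((Finset.Icc 1 (s + 1)).filter fun v => t ≤ σ.part v * ℓ + (s + 1 - v) * (ℓ - 1)).card

/-- The `i`-th part of the partition corresponding to the data `(μ, r, s, ρ, σ)`. -/
def decompPart (ℓ : ℕ) (mu : YPartition) (r s : ℕ) (ρ σ : YPartition) (i : ℕ) : ℕ :=
  if i = 0 then 0
  else if i ≤ r + 1 then s + mu.part 1 + (r + 1 - i) * (ℓ - 1) + ρ.part i * ℓ
  else if i ≤ r + max mu.length 1 then s + mu.part (i - r)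
  else bottomPart ℓ s σ (i - (r + max mu.length 1))

/-- Admissibility of the decomposition data `(μ, r, s, ρ, σ)`. -/
def GoodData (ℓ : ℕ) (mu : YPartition) (r s : ℕ) (ρ σ : YPartition) : Prop :=
  IsCore ℓ mu ∧ mu.part 1 < mu.part 2 + (ℓ - 1) ∧ mu.colLen 1 < mu.colLen 2 + (ℓ - 1) ∧
  ρ.length ≤ r + 1 ∧ σ.length ≤ s + 1 ∧
  (mu.cells = ∅ → ρ.part (r + 1) = 0 ∨ σ.part (s + 1) = 0)

/-- `lam ≈ (μ, r, s, ρ, σ)`. -/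
def Decomposes (ℓ : ℕ) (lam mu : YPartition) (r s : ℕ) (ρ σ : YPartition) : Prop :=
  ∀ i : ℕ, lam.part i = decompPart ℓ mu r s ρ σ i

/-- Removal of a single `ℓ`-rim hook. -/
def RemoveHook (ℓ : ℕ) (lam mu : YPartition) : Prop :=
  ∃ S : Set (ℕ × ℕ), IsRimHook ℓ lam S ∧ mu.cells = lam.cells \ S

/-- `lam` has `ℓ`-core `nu` and `ℓ`-weight `w`. -/
def HasCoreAndWeight (ℓ : ℕ) (lam nu : YPartition) (w : ℕ) : Prop :=
  IsCore ℓ nu ∧ RelIter (RemoveHook ℓ) w lam nu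

/-- An L-partition. -/
def IsLPartition (ℓ : ℕ) (lam : YPartition) : Prop :=
  ¬ ∃ p : ℕ × ℕ, p ∈ lam.cells ∧ ℓ ∣ lam.hook p.1 p.2 ∧
    (lam.arm p.1 p.2 < (ℓ - 1) * lam.leg p.1 p.2 ∨
     lam.leg p.1 p.2 < (ℓ - 1) * lam.arm p.1 p.2)

end YPartition

open YPartition

/-!
By transposition it suffices to treat a horizontal hook, i.e. `μ` arises from `λ` by adding
`ℓ` boxes to row `r`, in the columns `p + 1, …, p + ℓ` with `p = λ_r`. Outside this strip
the hook lengths change by `0` (or by `ℓ` in row `r`), so divisibility by `ℓ` is unchanged.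
In a row `a < r` the strip hooks are `ℓ` consecutive integers, and each grows by `1`; modulo
`ℓ` this rotates the strip columns cyclically (column `b` of `λ` behaves like column `b + 1` of
`μ`, column `p + ℓ` like column `p + 1`). So a witness `(a, b), (a, y), (x, b)` for `λ` is moved
to one for `μ` by rotating `b` if it lies in the strip, while a strip column `y` is replaced by
whichever of `p + 1`, `p + 2` has a hook not divisible by `ℓ`.
-/

theorem not_dvd_add_one_of_dvd {k n : ℕ} (hk : 2 ≤ k) (h : k ∣ n) : ¬ k ∣ n + 1 :=
  fun h' => Nat.not_dvd_of_pos_of_lt one_pos hk ((Nat.dvd_add_right h).1 h')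

namespace YPartition

theorem ext_part {μ ν : YPartition} (h : μ.part = ν.part) : μ = ν := by
  cases μ; cases ν; subst h; rfl

theorem colLen_eq_ncard (μ : YPartition) (b : ℕ) :
    μ.colLen b = {a : ℕ | 1 ≤ a ∧ b ≤ μ.part a}.ncard :=
  Nat.card_coe_set_eq _

theorem colLen_zero (μ : YPartition) : μ.colLen 0 = 0 := by
  rw [colLen_eq_ncard]
  refine Set.Infinite.ncard ((Set.Ici_infinite 1).mono fun a ha => ?_)
  exact ⟨ha, Nat.zero_le _⟩

theorem le_colLen_iff {μ : YPartition} {a b : ℕ} (ha : 1 ≤ a) (hb : 1 ≤ b) :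
    a ≤ μ.colLen b ↔ b ≤ μ.part a := by
  rw [colLen_eq_ncard]
  constructor
  · intro h
    by_contra! hlt
    have hsub : {x : ℕ | 1 ≤ x ∧ b ≤ μ.part x} ⊆ Finset.Icc 1 (a - 1) := by
      rintro x ⟨hx, hbx⟩
      have : x < a := by
        by_contra! hax
        have := μ.antitone a x ha hax
        omega
      simp only [Finset.coe_Icc, Set.mem_Icc]
      omega
    have := Set.ncard_le_ncard hsub (Finset.finite_toSet _)
    rw [Set.ncard_coe_finset, Nat.card_Icc] at this
    omega
  · intro h
    obtain ⟨N, hN⟩ := μ.eventually_zero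
    have hfin : {x : ℕ | 1 ≤ x ∧ b ≤ μ.part x}.Finite := by
      refine (Set.finite_Iio N).subset fun x ⟨_, hbx⟩ => Set.mem_Iio.2 ?_
      by_contra! hNx
      have := hN x hNx
      omega
    have hsub : (Finset.Icc 1 a : Set ℕ) ⊆ {x : ℕ | 1 ≤ x ∧ b ≤ μ.part x} := by
      intro x hx
      simp only [Finset.coe_Icc, Set.mem_Icc] at hx
      exact ⟨hx.1, h.trans (μ.antitone x a hx.1 hx.2)⟩
    have := Set.ncard_le_ncard hsub hfin
    rw [Set.ncard_coe_finset, Nat.card_Icc] at this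
    omega

theorem colLen_eq_of_le_part_iff {μ : YPartition} {b k : ℕ} (hb : 1 ≤ b)
    (h : ∀ a, 1 ≤ a → (b ≤ μ.part a ↔ a ≤ k)) : μ.colLen b = k := by
  refine eq_of_forall_le_iff fun a => ?_
  rcases Nat.eq_zero_or_pos a with rfl | ha
  · simp
  · rw [le_colLen_iff ha hb, h a ha]

theorem part_le_of_forall_mem_cells {lam mu : YPartition} {i : ℕ}
    (h : ∀ b, (i, b) ∈ lam.cells → (i, b) ∈ mu.cells) : lam.part i ≤ mu.part i := by
  rcases Nat.eq_zero_or_pos i with rfl | hi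
  · simp [lam.zero_at_zero]
  rcases Nat.eq_zero_or_pos (lam.part i) with h0 | hpos
  · omega
  exact (h _ ⟨hi, hpos, le_rfl⟩).2.2

theorem part_le_of_cells_subset {lam mu : YPartition} (h : lam.cells ⊆ mu.cells) (i : ℕ) :
    lam.part i ≤ mu.part i :=
  part_le_of_forall_mem_cells fun _ hb => h hb

def transpose (μ : YPartition) : YPartition where
  part := μ.colLen
  zero_at_zero := μ.colLen_zero
  antitone i j hi hij := by
    rcases Nat.eq_zero_or_pos (μ.colLen j) with h0 | hpos
    · omega
    have hj : j ≤ μ.part (μ.colLen j) := (le_colLen_iff hpos (hi.trans hij)).1 le_rfl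
    exact (le_colLen_iff hpos hi).2 (hij.trans hj)
  eventually_zero := by
    refine ⟨μ.part 1 + 1, fun b hb => colLen_eq_of_le_part_iff (by omega) fun a ha => ?_⟩
    have := μ.antitone 1 a le_rfl ha
    omega

theorem transpose_part (μ : YPartition) : μ.transpose.part = μ.colLen := rfl

theorem colLen_transpose (μ : YPartition) (b : ℕ) : μ.transpose.colLen b = μ.part b := by
  rcases Nat.eq_zero_or_pos b with rfl | hb
  · rw [colLen_zero, μ.zero_at_zero]
  exact colLen_eq_of_le_part_iff hb fun a ha => le_colLen_iff hb ha

theorem transpose_transpose (μ : YPartition) : μ.transpose.transpose = μ :=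
  ext_part (funext μ.colLen_transpose)

theorem mem_cells_transpose {μ : YPartition} {a b : ℕ} :
    (a, b) ∈ μ.transpose.cells ↔ (b, a) ∈ μ.cells := by
  change 1 ≤ a ∧ 1 ≤ b ∧ b ≤ μ.colLen a ↔ 1 ≤ b ∧ 1 ≤ a ∧ a ≤ μ.part b
  constructor
  · rintro ⟨ha, hb, h⟩
    exact ⟨hb, ha, (le_colLen_iff hb ha).1 h⟩
  · rintro ⟨hb, ha, h⟩
    exact ⟨ha, hb, (le_colLen_iff hb ha).2 h⟩

theorem cells_transpose (μ : YPartition) : μ.transpose.cells = Prod.swap ⁻¹' μ.cells := by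
  ext ⟨a, b⟩
  exact mem_cells_transpose

theorem hook_transpose (μ : YPartition) (a b : ℕ) : μ.transpose.hook a b = μ.hook b a := by
  simp only [hook, transpose_part, colLen_transpose]
  omega

theorem not_isJM_transpose {ℓ : ℕ} {μ : YPartition} (h : ¬ IsJM ℓ μ) :
    ¬ IsJM ℓ μ.transpose := by
  simp only [IsJM, not_not] at h ⊢
  obtain ⟨a, b, y, x, hab, hay, hxb, hdvd, hy, hx⟩ := h
  refine ⟨b, a, x, y, mem_cells_transpose.2 hab, mem_cells_transpose.2 hxb,
    mem_cells_transpose.2 hay, ?_, ?_, ?_⟩ <;> rwa [hook_transpose]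

theorem isJM_transpose_iff {ℓ : ℕ} {μ : YPartition} : IsJM ℓ μ.transpose ↔ IsJM ℓ μ := by
  constructor
  · intro h
    by_contra h'
    exact not_isJM_transpose h' h
  · intro h
    by_contra h'
    rw [← μ.transpose_transpose] at h
    exact not_isJM_transpose h' h

theorem two_le_of_not_isJM {ℓ : ℕ} {μ : YPartition} (h : ¬ IsJM ℓ μ) : 2 ≤ ℓ := by
  simp only [IsJM, not_not] at h
  obtain ⟨a, b, y, -, -, -, -, hdvd, hy, -⟩ := h
  rcases ℓ with _ | _ | ℓ
  · simp [hook] at hdvd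
  · exact absurd (one_dvd _) hy
  · omega

structure IsRowExtension (lam mu : YPartition) (r k : ℕ) : Prop where
  part_of_ne : ∀ i, i ≠ r → mu.part i = lam.part i
  part_row : mu.part r = lam.part r + k

namespace IsRowExtension

variable {lam mu : YPartition} {r k a b : ℕ}

theorem part_le (h : IsRowExtension lam mu r k) (i : ℕ) : lam.part i ≤ mu.part i := by
  rcases eq_or_ne i r with rfl | hi
  · rw [h.part_row]; omega
  · rw [h.part_of_ne i hi]

theorem cells_subset (h : IsRowExtension lam mu r k) : lam.cells ⊆ mu.cells :=
  fun _ ⟨h1, h2, h3⟩ => ⟨h1, h2, h3.trans (h.part_le _)⟩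

theorem add_le_part (h : IsRowExtension lam mu r k) (ha : 1 ≤ a) (har : a < r) :
    lam.part r + k ≤ lam.part a := by
  rw [← h.part_of_ne a har.ne, ← h.part_row]
  exact mu.antitone a r ha har.le

theorem one_le_row (h : IsRowExtension lam mu r k) (hk : 0 < k) : 1 ≤ r := by
  by_contra! h0
  have := h.part_row
  rw [Nat.lt_one_iff.1 h0, lam.zero_at_zero, mu.zero_at_zero] at this
  omega

theorem lt_of_mem_cells (h : IsRowExtension lam mu r k) (hab : (a, b) ∈ lam.cells)
    (hb : lam.part r < b) (hbk : b ≤ lam.part r + k) : a < r := by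
  by_contra! hra
  have := lam.antitone r a (h.one_le_row (by omega)) hra
  have : b ≤ lam.part a := hab.2.2
  omega

theorem mem_cells_of_lt (h : IsRowExtension lam mu r k) (ha : 1 ≤ a) (har : a < r)
    (hb : 1 ≤ b) (hbk : b ≤ lam.part r + k) : (a, b) ∈ mu.cells :=
  ⟨ha, hb, (hbk.trans (h.add_le_part ha har)).trans (h.part_le a)⟩

theorem colLen_eq (h : IsRowExtension lam mu r k) (hb : b ≤ lam.part r ∨ lam.part r + k < b) :
    mu.colLen b = lam.colLen b := by
  simp only [colLen]
  congr 3
  ext x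
  rcases eq_or_ne x r with rfl | hx
  · rw [h.part_row]; omega
  · rw [h.part_of_ne x hx]

theorem colLen_strip (h : IsRowExtension lam mu r k) (hb : lam.part r < b)
    (hbk : b ≤ lam.part r + k) : lam.colLen b = r - 1 ∧ mu.colLen b = r := by
  have hrow : ∀ x, r ≤ x → lam.part x ≤ lam.part r := fun x hx =>
    lam.antitone r x (h.one_le_row (by omega)) hx
  constructor <;> refine colLen_eq_of_le_part_iff (by omega) fun x hx => ?_
  · constructor
    · intro hbx
      by_contra! hrx
      have := hrow x (by omega)
      omega
    · intro hxr
      have := h.add_le_part hx (by omega)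
      omega
  · constructor
    · intro hbx
      by_contra! hrx
      rw [h.part_of_ne x hrx.ne'] at hbx
      have := hrow x hrx.le
      omega
    · intro hxr
      have := mu.antitone x r hx hxr
      rw [h.part_row] at this
      omega

theorem hook_eq (h : IsRowExtension lam mu r k) (ha : a ≠ r)
    (hb : b ≤ lam.part r ∨ lam.part r + k < b) : mu.hook a b = lam.hook a b := by
  simp only [hook, h.colLen_eq hb, h.part_of_ne a ha]

theorem hook_row (h : IsRowExtension lam mu r k) (hb : b ≤ lam.part r) :
    mu.hook r b = lam.hook r b + k := by
  simp only [hook, h.colLen_eq (.inl hb), h.part_row]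
  omega

theorem dvd_hook_iff (h : IsRowExtension lam mu r k) (hab : (a, b) ∈ lam.cells)
    (hb : b ≤ lam.part r ∨ lam.part r + k < b) : k ∣ mu.hook a b ↔ k ∣ lam.hook a b := by
  rcases eq_or_ne a r with rfl | ha
  · rw [h.hook_row hab.2.2, Nat.dvd_add_self_right]
  · rw [h.hook_eq ha hb]

theorem hook_strip (h : IsRowExtension lam mu r k) (ha : 1 ≤ a) (har : a < r)
    (hb : lam.part r < b) (hbk : b ≤ lam.part r + k) :
    lam.hook a b + b + a = lam.part a + r ∧ mu.hook a b = lam.hook a b + 1 := by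
  obtain ⟨hlam, hmu⟩ := h.colLen_strip hb hbk
  have := h.add_le_part ha har
  simp only [hook, hlam, hmu, h.part_of_ne a har.ne]
  omega

theorem exists_col_dvd_hook_iff (h : IsRowExtension lam mu r k) (hb : lam.part r < b)
    (hbk : b ≤ lam.part r + k) : ∃ b', lam.part r < b' ∧ b' ≤ lam.part r + k ∧
      ∀ a, 1 ≤ a → a < r → (k ∣ mu.hook a b' ↔ k ∣ lam.hook a b) := by
  rcases Nat.lt_or_ge b (lam.part r + k) with hlt | hge
  · refine ⟨b + 1, by omega, hlt, fun a ha har => ?_⟩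
    obtain ⟨h₁, -⟩ := h.hook_strip ha har hb hbk
    obtain ⟨h₂, h₃⟩ := h.hook_strip ha har (b := b + 1) (by omega) hlt
    rw [show mu.hook a (b + 1) = lam.hook a b by omega]
  · refine ⟨lam.part r + 1, by omega, by omega, fun a ha har => ?_⟩
    obtain ⟨h₁, -⟩ := h.hook_strip ha har hb hbk
    obtain ⟨h₂, h₃⟩ := h.hook_strip ha har (b := lam.part r + 1) (by omega) (by omega)
    rw [show mu.hook a (lam.part r + 1) = lam.hook a b + k by omega, Nat.dvd_add_self_right]

theorem exists_not_dvd_hook (h : IsRowExtension lam mu r k) (hk : 2 ≤ k) (ha : 1 ≤ a)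
    (har : a < r) : ∃ y, (a, y) ∈ mu.cells ∧ ¬ k ∣ mu.hook a y := by
  obtain ⟨h₁, h₂⟩ := h.hook_strip ha har (b := lam.part r + 1) (by omega) (by omega)
  obtain ⟨h₃, h₄⟩ := h.hook_strip ha har (b := lam.part r + 2) (by omega) (by omega)
  by_cases hd : k ∣ mu.hook a (lam.part r + 2)
  · refine ⟨lam.part r + 1, h.mem_cells_of_lt ha har (by omega) (by omega), ?_⟩
    rw [show mu.hook a (lam.part r + 1) = mu.hook a (lam.part r + 2) + 1 by omega]
    exact not_dvd_add_one_of_dvd hk hd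
  · exact ⟨lam.part r + 2, h.mem_cells_of_lt ha har (by omega) (by omega), hd⟩

theorem not_isJM (h : IsRowExtension lam mu r k) (hlam : ¬ IsJM k lam) : ¬ IsJM k mu := by
  have hk := two_le_of_not_isJM hlam
  simp only [IsJM, not_not] at hlam ⊢
  obtain ⟨a, b, y, x, hab, hay, hxb, hdvd, hy, hx⟩ := hlam
  by_cases hb : lam.part r < b ∧ b ≤ lam.part r + k
  · obtain ⟨b', hb'r, hb'k, hrot⟩ := h.exists_col_dvd_hook_iff hb.1 hb.2
    have har := h.lt_of_mem_cells hab hb.1 hb.2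
    have hxr := h.lt_of_mem_cells hxb hb.1 hb.2
    refine ⟨a, b', b, x, h.mem_cells_of_lt hab.1 har (by omega) hb'k, h.cells_subset hab,
      h.mem_cells_of_lt hxb.1 hxr (by omega) hb'k, (hrot a hab.1 har).2 hdvd, ?_,
      fun hd => hx ((hrot x hxb.1 hxr).1 hd)⟩
    rw [(h.hook_strip hab.1 har hb.1 hb.2).2]
    exact not_dvd_add_one_of_dvd hk hdvd
  · have hb' : b ≤ lam.part r ∨ lam.part r + k < b := by omega
    obtain ⟨y', hay', hy'⟩ : ∃ y', (a, y') ∈ mu.cells ∧ ¬ k ∣ mu.hook a y' := by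
      by_cases hys : lam.part r < y ∧ y ≤ lam.part r + k
      · exact h.exists_not_dvd_hook hk hab.1 (h.lt_of_mem_cells hay hys.1 hys.2)
      · exact ⟨y, h.cells_subset hay, by rwa [h.dvd_hook_iff hay (by omega)]⟩
    exact ⟨a, b, y', x, h.cells_subset hab, hay', h.cells_subset hxb,
      (h.dvd_hook_iff hab hb').2 hdvd, hy', by rwa [h.dvd_hook_iff hxb hb']⟩

end IsRowExtension

theorem isRowExtension_of_cells_eq_sdiff {lam mu : YPartition} {S : Set (ℕ × ℕ)} {r : ℕ}
    (hS : S ⊆ mu.cells) (hdiff : lam.cells = mu.cells \ S) (hrow : ∀ q ∈ S, q.1 = r) :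
    IsRowExtension lam mu r S.ncard := by
  have hsub : lam.cells ⊆ mu.cells := hdiff ▸ Set.sdiff_subset
  have hle := part_le_of_cells_subset hsub r
  refine ⟨fun i hi => le_antisymm (part_le_of_forall_mem_cells fun b hb => ?_)
    (part_le_of_cells_subset hsub i), ?_⟩
  · rw [hdiff]
    exact ⟨hb, fun hbS => hi (hrow _ hbS)⟩
  have hS_eq : S = Prod.mk r '' Set.Ioc (lam.part r) (mu.part r) := by
    ext ⟨a, b⟩
    simp only [Set.mem_image, Set.mem_Ioc, Prod.mk.injEq]
    constructor
    · intro hab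
      have har : a = r := hrow _ hab
      subst har
      have hnot : (a, b) ∉ lam.cells := by rw [hdiff]; exact fun h => h.2 hab
      obtain ⟨ha, hb, hbm⟩ := hS hab
      exact ⟨b, ⟨by by_contra! h; exact hnot ⟨ha, hb, h⟩, hbm⟩, rfl, rfl⟩
    · rintro ⟨b, ⟨hlb, hbm⟩, rfl, rfl⟩
      have hr : 1 ≤ r := by
        by_contra! h0
        rw [Nat.lt_one_iff.1 h0, mu.zero_at_zero] at hbm
        omega
      by_contra hrb
      have hmem : (r, b) ∈ lam.cells := by rw [hdiff]; exact ⟨⟨hr, by omega, hbm⟩, hrb⟩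
      have : b ≤ lam.part r := hmem.2.2
      omega
  rw [hS_eq, Set.ncard_image_of_injective _ (Prod.mk_right_injective r), Set.ncard_Ioc_nat]
  omega

end YPartition

theorem statement0_general (ℓ : ℕ) (lam mu : YPartition) (S : Set (ℕ × ℕ))
    (hnotJM : ¬ IsJM ℓ lam)
    (hhook : IsRimHook ℓ mu S)
    (hhv : HorizontalHook S ∨ VerticalHook S)
    (hdiff : lam.cells = mu.cells \ S) :
    ¬ IsJM ℓ mu := by
  obtain ⟨hS, hcard, -⟩ := hhook
  rcases hhv with ⟨r, hrow⟩ | ⟨c, hcol⟩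
  · have h := isRowExtension_of_cells_eq_sdiff hS hdiff hrow
    rw [hcard] at h
    exact h.not_isJM hnotJM
  · have h := isRowExtension_of_cells_eq_sdiff (lam := lam.transpose) (mu := mu.transpose)
      (S := Prod.swap ⁻¹' S) (by rw [cells_transpose]; exact Set.preimage_mono hS)
      (by rw [cells_transpose, cells_transpose, hdiff, Set.preimage_sdiff])
      (fun q hq => hcol _ hq)
    rw [Set.ncard_preimage_of_injective_subset_range Prod.swap_injective
      (Prod.swap_surjective.range_eq ▸ Set.subset_univ S), hcard] at h
    exact isJM_transpose_iff.not.1 (h.not_isJM (not_isJM_transpose hnotJM))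

/-- If `λ` is not an `(ℓ,0)`-JM partition and `μ` is obtained from `λ` by
adding a horizontal or vertical `ℓ`-rim hook (i.e. `λ = μ \ S` for a horizontal or
vertical removable `ℓ`-rim hook `S` of `μ`), then `μ` is not an `(ℓ,0)`-JM partition. -/
theorem statement0 (ℓ : ℕ) (hℓ : 2 < ℓ) (lam mu : YPartition) (S : Set (ℕ × ℕ))
    (hnotJM : ¬ IsJM ℓ lam)
    (hhook : IsRimHook ℓ mu S)
    (hhv : HorizontalHook S ∨ VerticalHook S)
    (hdiff : lam.cells = mu.cells \ S) :
    ¬ IsJM ℓ mu :=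
  statement0_general ℓ lam mu S hnotJM hhook hhv hdiff
end
end

section
/- Fix an integer ℓ > 2, a partition λ, and a position (α,β) of λ. If the box (α,β) of λ is locked and there is a box of λ in position (α−(ℓ−1), β+1), then the box (α−(ℓ−1), β+1) is locked. -/
noncomputable section

open YPartition

/-! Induct on the derivation of the lock of `(a + (ℓ - 1), b)`. Below row `a`, the ladder of
`(a, b + 1)` consists of the box `(a + (ℓ - 1), b)` followed by the ladder of that box below it,
so the type I condition passes from `(a + (ℓ - 1), b)` to `(a, b + 1)`, and the box above
`(a, b + 1)` is locked by the induction hypothesis. If instead row `a` ends in column `b`, then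
`(a, b)` is locked: a locked box that ends its row cannot be of type II, so locking propagates
up its column. -/

namespace YPartition

variable {ℓ : ℕ} {μ : YPartition}

theorem Locked.mem_cells {p : ℕ × ℕ} (h : Locked ℓ μ p) : p ∈ μ.cells := by
  cases h <;> assumption

theorem Locked.of_le_col {a b b' : ℕ} (h : Locked ℓ μ (a, b')) (hb : b ≤ b')
    (hmem : (a, b) ∈ μ.cells) : Locked ℓ μ (a, b) := by
  rcases hb.lt_or_eq with hlt | rfl
  · exact .typeII a b b' hmem hlt h
  · exact h

theorem Locked.up_of_part_le {a b : ℕ} (h : Locked ℓ μ (a + 1, b)) (ha : 1 ≤ a)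
    (hend : μ.part (a + 1) ≤ b) : Locked ℓ μ (a, b) := by
  cases h with
  | typeI_top => omega
  | typeI_up _ _ _ hup _ => exact hup
  | typeII _ _ b' _ hlt h' =>
      have : b' ≤ μ.part (a + 1) := h'.mem_cells.2.2
      omega

theorem Locked.of_row_le {a a' b : ℕ} (h : Locked ℓ μ (a', b)) (ha : 1 ≤ a) (haa' : a ≤ a')
    (hend : μ.part a ≤ b) : Locked ℓ μ (a, b) := by
  induction a', haa' using Nat.le_induction with
  | base => exact h
  | succ a' haa' ih =>
      exact ih (h.up_of_part_le (by omega) ((μ.antitone a (a' + 1) ha (by omega)).trans hend))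

theorem ladderClear_of_next_on_ladder {a b : ℕ} (hℓ : 2 ≤ ℓ)
    (hmem : (a + (ℓ - 1), b) ∈ μ.cells) (hclear : LadderClear ℓ μ (a + (ℓ - 1)) b) :
    LadderClear ℓ μ a (b + 1) := by
  intro x d hx hd hladder hax hnot
  obtain ⟨m, rfl⟩ : ∃ m, ℓ = m + 1 := ⟨ℓ - 1, by omega⟩
  simp only [Nat.add_sub_cancel] at hmem hclear
  have hm : (1 : ℤ) ≤ m := by exact_mod_cast (by omega : 1 ≤ m)
  have hxeq : (x : ℤ) = a + m * (b + 1 - d) := by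
    unfold SameLadder at hladder
    push_cast at hladder
    linarith
  have hdb : d ≤ b := by
    by_contra! hbd
    have : (b : ℤ) + 1 ≤ d := by exact_mod_cast hbd
    have : (a : ℤ) < x := by exact_mod_cast hax
    nlinarith
  obtain ⟨k, rfl⟩ := Nat.exists_eq_add_of_le hdb
  cases k with
  | zero =>
      have : x = a + m := by push_cast at hxeq; omega
      exact absurd (this ▸ hmem) hnot
  | succ k =>
      have hxeq' : (x : ℤ) = a + m + m * (k + 1) := by rw [hxeq]; push_cast; ring
      refine hclear x d hx hd ?_ ?_ hnot
      · unfold SameLadder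
        push_cast
        linarith
      · have : (m : ℤ) ≤ m * (k + 1) := by nlinarith
        omega

theorem Locked.ladder_prev_row (hℓ : 2 ≤ ℓ) {p : ℕ × ℕ} (hp : Locked ℓ μ p) :
    ∀ a c, p.1 = a + (ℓ - 1) → c ≤ p.2 + 1 → (a, c) ∈ μ.cells → Locked ℓ μ (a, c) := by
  induction hp with
  | typeI_top b _ _ =>
      intro a c hrow _ hac
      have := hac.1
      dsimp only at hrow
      omega
  | typeI_up A b hmem hup hclear ih =>
      intro a c hrow hc hac
      dsimp only at hrow hc
      have ha := hac.1
      by_cases hlong : b + 1 ≤ μ.part a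
      · have hclear' : LadderClear ℓ μ a (b + 1) :=
          ladderClear_of_next_on_ladder hℓ (hrow ▸ hmem) (hrow ▸ hclear)
        have hab : (a, b + 1) ∈ μ.cells := ⟨ha, by omega, hlong⟩
        refine Locked.of_le_col ?_ hc hac
        obtain rfl | ha2 := ha.eq_or_lt
        · exact .typeI_top _ hab hclear'
        · obtain ⟨a, rfl⟩ := Nat.exists_eq_add_one_of_ne_zero (by omega : a ≠ 0)
          have habove : (a, b + 1) ∈ μ.cells :=
            ⟨by omega, by omega, hlong.trans (μ.antitone a (a + 1) (by omega) (by omega))⟩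
          exact .typeI_up a _ hab (ih a (b + 1) (by omega) le_rfl habove) hclear'
      · have hend : μ.part a ≤ b := by omega
        have hcb : c ≤ b := (show c ≤ μ.part a from hac.2.2).trans hend
        exact (hup.of_row_le ha (by omega) hend).of_le_col hcb hac
  | typeII A b b' _ hlt _ ih =>
      intro a c hrow hc hac
      exact ih a c hrow (by dsimp only at hc ⊢; omega) hac

end YPartition

/-- if the box `(α,β) = (a+(ℓ−1), b)` of `μ` is locked and there is a box of
`μ` in position `(α−(ℓ−1), β+1) = (a, b+1)`, then the latter box is locked. -/
theorem statement5 (ℓ : ℕ) (hℓ : 2 < ℓ) (mu : YPartition) (a b : ℕ)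
    (hlock : Locked ℓ mu (a + (ℓ - 1), b))
    (hmem : (a, b + 1) ∈ mu.cells) :
    Locked ℓ mu (a, b + 1) :=
  hlock.ladder_prev_row hℓ.le a (b + 1) rfl le_rfl hmem
end
end

section
/- Fix an integer ℓ > 2. For every partition λ, the diagram Sλ obtained by moving all unlocked boxes of λ down their ladders is the Young diagram of a partition. -/
noncomputable section

open YPartition
namespace S7
open YPartition

variable {ℓ : ℕ} {lam : YPartition}

lemma cells_def {a b : ℕ} : (a,b) ∈ lam.cells ↔ 1 ≤ a ∧ 1 ≤ b ∧ b ≤ lam.part a := Iff.rfl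

lemma cells_up {a b : ℕ} (ha : 1 ≤ a) (h : (a+1,b) ∈ lam.cells) : (a,b) ∈ lam.cells := by
  obtain ⟨-, hb, hle⟩ := h
  exact ⟨ha, hb, hle.trans (lam.antitone a (a+1) ha (Nat.le_succ a))⟩

lemma cells_left {a b b' : ℕ} (h : (a,b) ∈ lam.cells) (h1 : 1 ≤ b') (h2 : b' ≤ b) :
    (a,b') ∈ lam.cells := ⟨h.1, h1, h2.trans h.2.2⟩

lemma locked_cells : ∀ {p : ℕ × ℕ}, Locked ℓ lam p → p ∈ lam.cells := by
  intro p h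
  induction h with
  | typeI_top b hc _ => exact hc
  | typeI_up a b hc _ _ _ => exact hc
  | typeII a b b' hc _ _ _ => exact hc

lemma locked_left {a b b' : ℕ} (h : Locked ℓ lam (a,b)) (h1 : 1 ≤ b') (h2 : b' ≤ b) :
    Locked ℓ lam (a,b') := by
  rcases eq_or_lt_of_le h2 with rfl | hlt
  · exact h
  · exact Locked.typeII a b' b (cells_left (locked_cells h) h1 h2) hlt h

lemma locked_up {a b : ℕ} (h : Locked ℓ lam (a+1,b)) (ha : 1 ≤ a) : Locked ℓ lam (a,b) := by
  generalize hp : ((a:ℕ)+1, b) = p at h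
  induction h generalizing a b with
  | typeI_top b' hc _ =>
      exfalso; have := (Prod.mk.inj hp).1; omega
  | typeI_up a' b' hc hl hcl ih =>
      obtain ⟨h1, h2⟩ := Prod.mk.inj hp
      subst h2; have : a' = a := by omega
      subst this; exact hl
  | typeII a' b' b'' hc hlt hl ih =>
      obtain ⟨h1, h2⟩ := Prod.mk.inj hp
      subst h2; subst h1
      have hl' : Locked ℓ lam (a, b'') := ih ha rfl
      have hc' : (a, b) ∈ lam.cells := cells_up ha hc
      exact Locked.typeII a b b'' hc' hlt hl'

lemma locked_up_iter {a b n : ℕ} (h : Locked ℓ lam (a+n, b)) (ha : 1 ≤ a) :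
    Locked ℓ lam (a,b) := by
  induction n with
  | zero => exact h
  | succ n ih =>
      have : a + (n+1) = (a+n) + 1 := by omega
      rw [this] at h
      exact ih (locked_up h (by omega))

/-- Chain-locked predicate. -/
def CL (ℓ : ℕ) (lam : YPartition) : ℕ → ℕ → Prop
  | 0, _ => False
  | 1, b => (1,b) ∈ lam.cells ∧ LadderClear ℓ lam 1 b
  | (a+2), b => ((a+2:ℕ),b) ∈ lam.cells ∧ LadderClear ℓ lam (a+2) b ∧
      ∃ b', b ≤ b' ∧ CL ℓ lam (a+1) b'

lemma CL_cell : ∀ {a b : ℕ}, CL ℓ lam a b → (a,b) ∈ lam.cells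
  | 0, _, h => h.elim
  | 1, _, h => h.1
  | (_+2), _, h => h.1

lemma CL_clear : ∀ {a b : ℕ}, CL ℓ lam a b → LadderClear ℓ lam a b
  | 0, _, h => h.elim
  | 1, _, h => h.2
  | (_+2), _, h => h.2.1

lemma CL_above : ∀ {a b : ℕ}, CL ℓ lam (a+2) b → ∃ b', b ≤ b' ∧ CL ℓ lam (a+1) b'
  | _, _, h => h.2.2

lemma CL_mk {a b : ℕ} (hc : (a,b) ∈ lam.cells) (hcl : LadderClear ℓ lam a b)
    (habove : a = 1 ∨ ∃ b', b ≤ b' ∧ CL ℓ lam (a-1) b') : CL ℓ lam a b := by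
  match a, habove with
  | 1, _ => exact ⟨hc, hcl⟩
  | (n+2), Or.inl h => omega
  | (n+2), Or.inr h => exact ⟨hc, hcl, h⟩
  | 0, h => exact absurd hc.1 (by omega)

lemma CL_locked : ∀ a, ∀ {b : ℕ}, CL ℓ lam a b → Locked ℓ lam (a, b) := by
  intro a
  induction a using Nat.strong_induction_on with
  | _ a ih =>
    intro b h
    match a, h with
    | 1, h => exact Locked.typeI_top b h.1 h.2
    | (n+2), h =>
        obtain ⟨b', hbb', hCL⟩ := h.2.2
        have hl' : Locked ℓ lam (n+1, b') := ih (n+1) (by omega) hCL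
        have hb1 : 1 ≤ b := (CL_cell h).2.1
        have hl'' : Locked ℓ lam (n+1, b) := locked_left hl' hb1 hbb'
        exact Locked.typeI_up (n+1) b h.1 hl'' h.2.1

lemma locked_iff_CL {a b : ℕ} (hb : 1 ≤ b) :
    Locked ℓ lam (a,b) ↔ ∃ b', b ≤ b' ∧ CL ℓ lam a b' := by
  constructor
  · intro h
    generalize hp : ((a:ℕ), b) = p at h
    induction h generalizing a b with
    | typeI_top b' hc hcl =>
        obtain ⟨h1, h2⟩ := Prod.mk.inj hp
        subst h1; subst h2
        exact ⟨b, le_rfl, ⟨hc, hcl⟩⟩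
    | typeI_up a' b' hc hl hcl ih =>
        obtain ⟨h1, h2⟩ := Prod.mk.inj hp
        subst h1; subst h2
        obtain ⟨b₂, hb₂, hCL⟩ := ih ((locked_cells hl).2.1) rfl
        refine ⟨b, le_rfl, CL_mk hc hcl (Or.inr ⟨b₂, hb₂, by simpa using hCL⟩)⟩
    | typeII a' b' b'' hc hlt hl ih =>
        obtain ⟨h1, h2⟩ := Prod.mk.inj hp
        subst h1; subst h2
        obtain ⟨b₂, hb₂, hCL⟩ := ih ((locked_cells hl).2.1) rfl
        exact ⟨b₂, by omega, hCL⟩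
  · rintro ⟨b', hbb', hCL⟩
    exact locked_left (CL_locked a hCL) hb hbb'

end S7
namespace S7
open YPartition

variable {ℓ : ℕ} {lam : YPartition}

lemma sameLadder_of_idx (hℓ : 2 < ℓ) {j v R1 R2 : ℕ} (hv : 1 ≤ v) (hR2 : 1 ≤ R2)
    (h : R1 + (ℓ-1) * (R2 - 1) = j + (ℓ-1) * (v - 1)) : SameLadder ℓ ((j,v) : ℕ × ℕ) (R1, R2) := by
  unfold SameLadder
  simp only
  have hcast : ((ℓ - 1 : ℕ) : ℤ) = (ℓ : ℤ) - 1 := by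
    have : (1:ℕ) ≤ ℓ := by omega
    push_cast [this]; ring
  have h' : (R1 : ℤ) + ((ℓ-1:ℕ):ℤ) * ((R2:ℤ) - 1) = (j:ℤ) + ((ℓ-1:ℕ):ℤ) * ((v:ℤ) - 1) := by
    have := congrArg (fun n : ℕ => (n : ℤ)) h
    push_cast [Nat.cast_sub hR2, Nat.cast_sub hv] at this ⊢
    linarith
  rw [hcast] at h'
  linarith

/-- From failure of LadderClear extract a concrete failure position. -/
lemma not_clear_failure (hℓ : 2 < ℓ) {c d : ℕ} (h : ¬ LadderClear ℓ lam c d) :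
    ∃ f, 1 ≤ f ∧ f < d ∧ (c + (ℓ-1)*(d-f), f) ∉ lam.cells ∧
      (c + (ℓ-1)*(d-f) - 1, f) ∈ lam.cells := by
  unfold LadderClear at h
  push_neg at h
  obtain ⟨c', d', hc', hd', hsl, hlt, hnc, hmem⟩ := h
  unfold SameLadder at hsl
  simp only at hsl
  have hm : ((ℓ:ℤ) - 1) = ((ℓ - 1 : ℕ) : ℤ) := by
    have h1 : (1:ℕ) ≤ ℓ := by omega
    push_cast [h1]
    ring
  rw [hm] at hsl
  have hdd : d' < d := by
    by_contra hcon
    push_neg at hcon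
    have h1 : (c:ℤ) < (c':ℤ) := by exact_mod_cast hlt
    have h2 : (d:ℤ) ≤ (d':ℤ) := by exact_mod_cast hcon
    have h3 : (0:ℤ) ≤ ((ℓ-1:ℕ):ℤ) := by positivity
    nlinarith [hsl]
  have hc'eq : c' = c + (ℓ-1) * (d - d') := by
    have : (c' : ℤ) = (c:ℤ) + ((ℓ-1:ℕ):ℤ) * ((d - d' : ℕ) : ℤ) := by
      rw [Nat.cast_sub hdd.le]; linarith [hsl]
    exact_mod_cast this
  exact ⟨d', hd', hdd, by rwa [← hc'eq], by rwa [← hc'eq]⟩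

/-- Use LadderClear at an explicit position on the same ladder. -/
lemma clear_at (hℓ : 2 < ℓ) {j v R1 R2 : ℕ} (hcl : LadderClear ℓ lam j v) (hv : 1 ≤ v)
    (hR1 : 1 ≤ R1) (hR2 : 1 ≤ R2) (hidx : R1 + (ℓ-1) * (R2 - 1) = j + (ℓ-1) * (v - 1))
    (hlt : j < R1) (hnc : (R1, R2) ∉ lam.cells) : (R1 - 1, R2) ∉ lam.cells :=
  hcl R1 R2 hR1 hR2 (sameLadder_of_idx hℓ hv hR2 hidx) hlt hnc

/-- The chain crossing lemma. -/
lemma cross (hℓ : 2 < ℓ) : ∀ a b, CL ℓ lam a b → ∀ c i, 1 ≤ c → c ≤ a →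
    (∀ v, CL ℓ lam c v → c + (ℓ-1)*(v-1) ≤ i) → i ≤ a + (ℓ-1)*(b-1) →
    ∃ j v, c ≤ j ∧ j ≤ a ∧ 1 ≤ v ∧ CL ℓ lam j v ∧ j + (ℓ-1)*(v-1) = i := by
  intro a
  induction a using Nat.strong_induction_on with
  | _ a ih =>
    intro b hCL c i hc hca hcv hi
    rcases eq_or_lt_of_le hi with heq | hlt
    · exact ⟨a, b, hca, le_rfl, (CL_cell hCL).2.1, hCL, heq.symm⟩
    · have hne : c ≠ a := by
        rintro rfl
        exact absurd (hcv b hCL) (by omega)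
      have hca' : c < a := lt_of_le_of_ne hca hne
      have ha2 : 2 ≤ a := by omega
      obtain ⟨n, rfl⟩ : ∃ n, a = n + 2 := ⟨a - 2, by omega⟩
      obtain ⟨b', hbb', hCL'⟩ := CL_above hCL
      have hb1 : 1 ≤ b := (CL_cell hCL).2.1
      have hb'1 : 1 ≤ b' := by omega
      have hstep : (n+2) + (ℓ-1)*(b-1) ≤ (n+1) + (ℓ-1)*(b'-1) + 1 := by
        have : (ℓ-1)*(b-1) ≤ (ℓ-1)*(b'-1) := Nat.mul_le_mul_left _ (by omega)
        omega
      obtain ⟨j, v, h1, h2, h3, h4, h5⟩ :=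
        ih (n+1) (by omega) b' hCL' c i hc (by omega) hcv (by omega)
      exact ⟨j, v, h1, by omega, h3, h4, h5⟩

end S7
namespace S7
open YPartition

variable {ℓ : ℕ} {lam : YPartition}

lemma mul_split (m x y z : ℕ) (h : x + y = z) : m*x + m*y = m*z := by
  rw [← Nat.left_distrib, h]

lemma mem_cells {a b : ℕ} (h1 : 1 ≤ a) (h2 : 1 ≤ b) (h3 : b ≤ lam.part a) :
    (a,b) ∈ lam.cells := ⟨h1, h2, h3⟩

lemma cells_part {a b : ℕ} (h : (a,b) ∈ lam.cells) : b ≤ lam.part a := h.2.2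

lemma sameLadder_dest (hℓ : 2 < ℓ) {a b c' d' : ℕ} (hsl : SameLadder ℓ ((a,b) : ℕ × ℕ) (c',d'))
    (hlt : a < c') : d' < b ∧ c' = a + (ℓ-1)*(b-d') := by
  unfold SameLadder at hsl
  simp only at hsl
  have hm : ((ℓ:ℤ) - 1) = ((ℓ - 1 : ℕ) : ℤ) := by
    have h1 : (1:ℕ) ≤ ℓ := by omega
    push_cast [h1]
    ring
  rw [hm] at hsl
  have hdd : d' < b := by
    by_contra hcon
    push_neg at hcon
    have h1 : (a:ℤ) < (c':ℤ) := by exact_mod_cast hlt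
    have h2 : (b:ℤ) ≤ (d':ℤ) := by exact_mod_cast hcon
    have h3 : (0:ℤ) ≤ ((ℓ-1:ℕ):ℤ) := by positivity
    nlinarith [hsl]
  refine ⟨hdd, ?_⟩
  have : (c' : ℤ) = (a:ℤ) + ((ℓ-1:ℕ):ℤ) * ((b - d' : ℕ) : ℤ) := by
    rw [Nat.cast_sub hdd.le]; linarith [hsl]
  exact_mod_cast this

/-- The key lemma P*: if `x = (c,d)` is an unlocked cell and the box above a ladder position
below `x` (on the ladder of `x`) is locked, then everything below that box on its own ladder
is locked. -/
lemma Pstar (hℓ : 2 < ℓ) {c d f : ℕ} (hx : (c,d) ∈ lam.cells) (hxl : ¬ Locked ℓ lam (c,d))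
    (hf : 1 ≤ f) (hfd : f < d) (hL : Locked ℓ lam (c + (ℓ-1)*(d-f) - 1, f)) :
    ∀ g h, 1 ≤ h → g + (ℓ-1)*(h-1) = (c + (ℓ-1)*(d-f) - 1) + (ℓ-1)*(f-1) →
      c + (ℓ-1)*(d-f) - 1 ≤ g → Locked ℓ lam (g, h) := by
  obtain ⟨hc1, hd1, hdle⟩ := hx
  have hm2 : 2 ≤ ℓ - 1 := by omega
  have hl21 : ℓ - 2 + 1 = ℓ - 1 := by omega
  have hdf1 : 1 ≤ d - f := by omega
  have hAge : ℓ - 1 ≤ (ℓ-1)*(d-f) := by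
    calc ℓ - 1 = (ℓ-1) * 1 := by ring
    _ ≤ (ℓ-1)*(d-f) := Nat.mul_le_mul_left _ hdf1
  set e1 := c + (ℓ-1)*(d-f) - 1 with he1def
  have he1 : e1 + 1 = c + (ℓ-1)*(d-f) := by omega
  have hce1 : c < e1 := by omega
  set K1 := e1 + (ℓ-1)*(f-1) with hK1def
  -- the chain above (e1, f)
  obtain ⟨b₀, hb₀f, hCL0⟩ := (locked_iff_CL hf).mp hL
  -- multiplicative facts
  have hmul1 : (ℓ-1)*(d-f) + (ℓ-1)*(f-1) = (ℓ-1)*(d-1) := by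
    rw [← Nat.left_distrib]; congr 1; omega
  -- anchors
  have anchors : ∀ i, K1 + 1 ≤ i + (ℓ-1) → i ≤ K1 →
      ∃ j v, c ≤ j ∧ j ≤ e1 ∧ 1 ≤ v ∧ CL ℓ lam j v ∧ j + (ℓ-1)*(v-1) = i := by
    intro i hlow hhigh
    have hcv : ∀ v, CL ℓ lam c v → c + (ℓ-1)*(v-1) ≤ i := by
      intro v hv
      have hvd : v ≤ d - 1 := by
        by_contra hcon
        push_neg at hcon
        exact hxl (locked_left (CL_locked c hv) hd1 (by omega))
      have p1 : (ℓ-1)*(v-1) ≤ (ℓ-1)*(d-2) := Nat.mul_le_mul_left _ (by omega)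
      have p2 : (ℓ-1)*(d-2) + (ℓ-1)*1 = (ℓ-1)*(d-1) := mul_split _ _ _ _ (by omega)
      rw [Nat.mul_one] at p2
      omega
    have hhigh' : i ≤ e1 + (ℓ-1)*(b₀-1) := by
      have : (ℓ-1)*(f-1) ≤ (ℓ-1)*(b₀-1) := Nat.mul_le_mul_left _ (by omega)
      omega
    obtain ⟨j, v, h1, h2, h3, h4, h5⟩ :=
      cross hℓ e1 b₀ hCL0 c i hc1 (by omega) hcv hhigh'
    exact ⟨j, v, h1, h2, h3, h4, h5⟩
  -- staircase
  have staircase : ∀ u, u + 1 ≤ f → f - u ≤ lam.part (e1 + (ℓ-1)*u) := by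
    intro u
    induction u with
    | zero =>
        intro _
        simpa using (locked_cells hL).2.2
    | succ u ihu =>
        intro huf
        have hIH : f - u ≤ lam.part (e1 + (ℓ-1)*u) := ihu (by omega)
        by_contra hcon
        push_neg at hcon
        have hmuls : (ℓ-1)*(u+1) = (ℓ-1)*u + (ℓ-1) := by ring
        have inner : ∀ r, r ≤ ℓ-2 → lam.part (e1 + (ℓ-1)*(u+1) - r) + (u + 2) ≤ f := by
          intro r
          induction r with
          | zero => intro _; simp only [Nat.sub_zero]; omega
          | succ r ihr =>
              intro hr
              have hprev : lam.part (e1 + (ℓ-1)*(u+1) - r) + (u + 2) ≤ f := ihr (by omega)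
              by_contra h2
              push_neg at h2
              have h2' : f - u - 1 ≤ lam.part (e1 + (ℓ-1)*(u+1) - (r+1)) := by omega
              obtain ⟨j, v, hj1, hj2, hv1, hCLjv, hidxjv⟩ :=
                anchors (K1 - r) (by omega) (by omega)
              have hfail := clear_at hℓ (CL_clear hCLjv) hv1
                (R1 := e1 + (ℓ-1)*(u+1) - r) (R2 := f - u - 1)
                (by omega) (by omega)
                (by
                  have hq : (ℓ-1)*(u+1) + (ℓ-1)*(f-u-1-1) = (ℓ-1)*(f-1) := by
                    rw [← Nat.left_distrib]; congr 1; omega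
                  omega)
                (by omega)
                (by
                  intro hmem
                  have hval := cells_part hmem
                  omega)
              refine hfail (mem_cells (by omega) (by omega) ?_)
              rw [show e1 + (ℓ-1)*(u+1) - r - 1 = e1 + (ℓ-1)*(u+1) - (r+1) from by omega]
              omega
        have hlast : lam.part (e1 + (ℓ-1)*u + 1) + (u+2) ≤ f := by
          have := inner (ℓ-2) le_rfl
          have harith : e1 + (ℓ-1)*(u+1) - (ℓ-2) = e1 + (ℓ-1)*u + 1 := by omega
          rwa [harith] at this
        obtain ⟨j, v, hj1, hj2, hv1, hCLjv, hidxjv⟩ :=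
          anchors (K1 - (ℓ-2)) (by omega) (by omega)
        have hfail := clear_at hℓ (CL_clear hCLjv) hv1
          (R1 := e1 + (ℓ-1)*u + 1) (R2 := f - u - 1)
          (by omega) (by omega)
          (by
            have hq : (ℓ-1)*u + (ℓ-1)*(f-u-1-1) = (ℓ-1)*(f-2) := by
              rw [← Nat.left_distrib]; congr 1; omega
            have hq2 : (ℓ-1)*(f-2) + (ℓ-1)*1 = (ℓ-1)*(f-1) := mul_split _ _ _ _ (by omega)
            rw [Nat.mul_one] at hq2
            omega)
          (by omega)
          (by
            intro hmem
            have hval := cells_part hmem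
            omega)
        refine hfail (mem_cells (by omega) (by omega) ?_)
        rw [show e1 + (ℓ-1)*u + 1 - 1 = e1 + (ℓ-1)*u from by omega]
        omega
  -- rebuild the chain downwards
  have Hchain : ∀ u, u + 1 ≤ f → ∃ v, f - u ≤ v ∧ CL ℓ lam (e1 + (ℓ-1)*u) v := by
    intro u
    induction u with
    | zero => intro _; exact ⟨b₀, by simpa using hb₀f, by simpa using hCL0⟩
    | succ u ihu =>
        intro huf
        obtain ⟨v, hvf, hCLv⟩ := ihu (by omega)
        -- the clear property at intermediate rows
        have clearStep : ∀ s, 1 ≤ s → s ≤ ℓ-1 → LadderClear ℓ lam (e1 + (ℓ-1)*u + s) (f-u-1) := by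
          intro s hs1 hs2 c' d' hc' hd' hsl hlt hnc
          exfalso
          apply hnc
          obtain ⟨hd'lt, hc'eq⟩ := sameLadder_dest hℓ hsl hlt
          set t := f - u - 1 - d' with htdef
          have ht1 : 1 ≤ t := by omega
          have hrow : c' ≤ e1 + (ℓ-1)*(u+1+t) := by
            have hq : (ℓ-1)*(u+1+t) = (ℓ-1)*u + (ℓ-1)*(1+t) := by ring
            have hq2 : (ℓ-1)*(f-u-1-d') ≤ (ℓ-1)*t := Nat.mul_le_mul_left _ (by omega)
            have hq3 : s + (ℓ-1)*t ≤ (ℓ-1)*(1+t) := by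
              have : (ℓ-1)*(1+t) = (ℓ-1) + (ℓ-1)*t := by ring
              omega
            omega
          have hst : f - (u+1+t) ≤ lam.part c' := by
            have hh1 : f - (u+1+t) ≤ lam.part (e1 + (ℓ-1)*(u+1+t)) :=
              staircase (u+1+t) (by omega)
            have hh2 : lam.part (e1 + (ℓ-1)*(u+1+t)) ≤ lam.part c' :=
              lam.antitone c' _ (by omega) hrow
            omega
          have hd'eq : d' = f - (u+1+t) := by omega
          exact mem_cells (by omega) hd' (by omega)
        have cellStep : ∀ s, 1 ≤ s → s ≤ ℓ-1 → (e1 + (ℓ-1)*u + s, f-u-1) ∈ lam.cells := by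
          intro s hs1 hs2
          have h1 : f - (u+1) ≤ lam.part (e1 + (ℓ-1)*(u+1)) := staircase (u+1) huf
          have h2 : lam.part (e1 + (ℓ-1)*(u+1)) ≤ lam.part (e1 + (ℓ-1)*u + s) := by
            apply lam.antitone _ _ (by omega)
            have : (ℓ-1)*(u+1) = (ℓ-1)*u + (ℓ-1) := by ring
            omega
          exact mem_cells (by omega) (by omega) (by omega)
        have G : ∀ r, r ≤ ℓ-2 → CL ℓ lam (e1 + (ℓ-1)*u + (r+1)) (f-u-1) := by
          intro r
          induction r with
          | zero =>
              intro _
              refine CL_mk (cellStep 1 le_rfl (by omega)) (clearStep 1 le_rfl (by omega)) ?_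
              refine Or.inr ⟨v, by omega, ?_⟩
              have : e1 + (ℓ-1)*u + 1 - 1 = e1 + (ℓ-1)*u := by omega
              rw [this]
              exact hCLv
          | succ r ihr =>
              intro hr
              refine CL_mk (cellStep (r+2) (by omega) (by omega))
                (clearStep (r+2) (by omega) (by omega)) ?_
              refine Or.inr ⟨f-u-1, le_rfl, ?_⟩
              have : e1 + (ℓ-1)*u + (r+2) - 1 = e1 + (ℓ-1)*u + (r+1) := by omega
              rw [this]
              exact ihr (by omega)
        refine ⟨f-u-1, by omega, ?_⟩
        have hG := G (ℓ-2) le_rfl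
        have hrew : e1 + (ℓ-1)*u + (ℓ-2+1) = e1 + (ℓ-1)*(u+1) := by
          rw [hl21]
          ring
        rwa [hrew] at hG
  -- conclusion
  intro g h hh1 hidx hge
  have hhf : h ≤ f := by
    have h1 : (ℓ-1)*(h-1) ≤ (ℓ-1)*(f-1) := by omega
    have h2 : h - 1 ≤ f - 1 := Nat.le_of_mul_le_mul_left h1 (by omega)
    omega
  have hgu : g = e1 + (ℓ-1)*(f-h) := by
    have hq : (ℓ-1)*(h-1) + (ℓ-1)*(f-h) = (ℓ-1)*(f-1) := by
      rw [← Nat.left_distrib]; congr 1; omega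
    omega
  obtain ⟨v, hvf, hCLv⟩ := Hchain (f-h) (by omega)
  have hLgv : Locked ℓ lam (g, v) := by
    rw [hgu]; exact CL_locked _ hCLv
  exact locked_left hLgv hh1 (by omega)

end S7
namespace S7
open YPartition

variable {ℓ : ℕ} {lam : YPartition}

def Uset (ℓ : ℕ) (lam : YPartition) (k : ℕ) : Set (ℕ × ℕ) :=
  (lam.cells ∩ LadderPositions ℓ k) \ lockedCells ℓ lam

lemma unlockedCount_eq (k : ℕ) : unlockedCount ℓ lam k = (Uset ℓ lam k).ncard := rfl

def Dset (ℓ : ℕ) (lam : YPartition) (k A : ℕ) : Set (ℕ × ℕ) :=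
  {x | x ∈ LadderPositions ℓ k ∧ A < x.1 ∧ x ∉ lockedCells ℓ lam ∧
    (x.1 - 1, x.2) ∈ lockedCells ℓ lam}

lemma LP_mem {p : ℕ × ℕ} {k : ℕ} :
    p ∈ LadderPositions ℓ k ↔ 1 ≤ p.1 ∧ 1 ≤ p.2 ∧ p.1 + (ℓ-1)*(p.2-1) = k := Iff.rfl

lemma LP_dest {p : ℕ × ℕ} {k : ℕ} (h : p ∈ LadderPositions ℓ k) :
    1 ≤ p.1 ∧ 1 ≤ p.2 ∧ p.1 + (ℓ-1)*(p.2-1) = k := h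

lemma LP_intro {a b k : ℕ} (h1 : 1 ≤ a) (h2 : 1 ≤ b) (h3 : a + (ℓ-1)*(b-1) = k) :
    (a,b) ∈ LadderPositions ℓ k := ⟨h1, h2, h3⟩

lemma cells_dest {p : ℕ × ℕ} (h : p ∈ lam.cells) :
    1 ≤ p.1 ∧ 1 ≤ p.2 ∧ p.2 ≤ lam.part p.1 := h

lemma LP_finite (hℓ : 2 < ℓ) (k : ℕ) : (LadderPositions ℓ k).Finite := by
  apply Set.Finite.subset ((Set.finite_Icc 1 k).prod (Set.finite_Icc 1 k))
  rintro ⟨p1, p2⟩ hm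
  obtain ⟨h1, h2, h3⟩ : 1 ≤ p1 ∧ 1 ≤ p2 ∧ p1 + (ℓ-1)*(p2-1) = k := LP_dest hm
  have hp2 : 1*(p2 - 1) ≤ (ℓ-1)*(p2-1) := Nat.mul_le_mul_right _ (by omega)
  simp only [Set.mem_prod, Set.mem_Icc]
  omega

lemma cells_finite : lam.cells.Finite := by
  obtain ⟨N, hN⟩ := lam.eventually_zero
  apply Set.Finite.subset ((Set.finite_Icc 1 N).prod (Set.finite_Icc 1 (lam.part 1)))
  rintro ⟨p1, p2⟩ hm
  obtain ⟨h1, h2, h3⟩ : 1 ≤ p1 ∧ 1 ≤ p2 ∧ p2 ≤ lam.part p1 := cells_dest hm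
  have hp1 : p1 < N := by
    by_contra hcon
    push_neg at hcon
    rw [hN p1 hcon] at h3
    omega
  have hp2 : p2 ≤ lam.part 1 := h3.trans (lam.antitone 1 p1 le_rfl h1)
  simp only [Set.mem_prod, Set.mem_Icc]
  omega

lemma Uset_finite (k : ℕ) : (Uset ℓ lam k).Finite :=
  cells_finite.subset (fun x hx => hx.1.1)

lemma Dset_finite (hℓ : 2 < ℓ) (k A : ℕ) : (Dset ℓ lam k A).Finite :=
  (LP_finite hℓ k).subset (fun x hx => hx.1)

lemma locked_sub_cells : lockedCells ℓ lam ⊆ lam.cells := fun _ h => locked_cells h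

lemma ladder_arith (hℓ : 2 < ℓ) {k : ℕ} {x y : ℕ × ℕ}
    (hx : x ∈ LadderPositions ℓ k) (hy : y ∈ LadderPositions ℓ k) (hlt : x.1 < y.1) :
    y.2 < x.2 ∧ y.1 = x.1 + (ℓ-1)*(x.2 - y.2) := by
  obtain ⟨hx1, hx2, hxk⟩ := LP_dest hx
  obtain ⟨hy1, hy2, hyk⟩ := LP_dest hy
  have hcol : y.2 < x.2 := by
    by_contra hcon
    push_neg at hcon
    have : (ℓ-1)*(x.2-1) ≤ (ℓ-1)*(y.2-1) := Nat.mul_le_mul_left _ (by omega)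
    omega
  have hsplit : (ℓ-1)*(x.2 - y.2) + (ℓ-1)*(y.2-1) = (ℓ-1)*(x.2-1) :=
    mul_split _ _ _ _ (by omega)
  exact ⟨hcol, by omega⟩

lemma ladder_unique (hℓ : 2 < ℓ) {k : ℕ} {x y : ℕ × ℕ}
    (hx : x ∈ LadderPositions ℓ k) (hy : y ∈ LadderPositions ℓ k) (h : x.1 = y.1) : x = y := by
  obtain ⟨hx1, hx2, hxk⟩ := LP_dest hx
  obtain ⟨hy1, hy2, hyk⟩ := LP_dest hy
  have h2 : (ℓ-1)*(x.2-1) = (ℓ-1)*(y.2-1) := by omega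
  have h3 : x.2 - 1 = y.2 - 1 := Nat.eq_of_mul_eq_mul_left (by omega) h2
  exact Prod.ext h (by omega)

lemma new_not_clear {x : ℕ × ℕ} (hxc : x ∈ lam.cells) (hxl : x ∉ lockedCells ℓ lam)
    (hnew : x.1 = 1 ∨ (x.1 - 1, x.2) ∈ lockedCells ℓ lam) :
    ¬ LadderClear ℓ lam x.1 x.2 := by
  intro hcl
  apply hxl
  show Locked ℓ lam x
  rcases hnew with h1 | h2
  · have : x = (1, x.2) := by rw [← h1]
    rw [this]
    rw [this] at hxc
    exact Locked.typeI_top x.2 hxc (by rwa [← h1])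
  · obtain ⟨n, hn⟩ : ∃ n, x.1 = n + 1 := ⟨x.1 - 1, by have := hxc.1; omega⟩
    have hx' : x = (n+1, x.2) := by rw [← hn]
    rw [hx']
    rw [hx'] at hxc
    refine Locked.typeI_up n x.2 hxc ?_ (by rw [← hn]; exact hcl)
    have : (n, x.2) = (x.1 - 1, x.2) := by rw [hn]; simp
    rw [this]
    exact h2

lemma Pstar_apply (hℓ : 2 < ℓ) {c d f g h : ℕ} (hx : (c,d) ∈ lam.cells)
    (hxl : (c,d) ∉ lockedCells ℓ lam) (hf : 1 ≤ f) (hfd : f < d)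
    (hL : (c + (ℓ-1)*(d-f) - 1, f) ∈ lockedCells ℓ lam)
    (hh : 1 ≤ h) (hidx : g + (ℓ-1)*(h-1) + 1 = c + (ℓ-1)*(d-1))
    (hge : c + (ℓ-1)*(d-f) - 1 ≤ g) : (g, h) ∈ lockedCells ℓ lam := by
  have hsplit : (ℓ-1)*(d-f) + (ℓ-1)*(f-1) = (ℓ-1)*(d-1) := mul_split _ _ _ _ (by omega)
  have hpos : 1*1 ≤ (ℓ-1)*(d-f) := Nat.mul_le_mul (by omega) (by omega)
  exact Pstar hℓ hx hxl hf hfd hL g h hh (by omega) hge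

/-- The main counting inequality. -/
lemma upcount (hℓ : 2 < ℓ) {a b : ℕ} (ha : 1 ≤ a) (hb : 1 ≤ b)
    (hq : (a,b) ∉ lockedCells ℓ lam) :
    unlockedCount ℓ lam (a+1+(ℓ-1)*(b-1)) ≤
      unlockedCount ℓ lam (a+(ℓ-1)*(b-1)) +
        (Dset ℓ lam (a+1+(ℓ-1)*(b-1)) (a+1)).ncard := by
  set K := a+1+(ℓ-1)*(b-1) with hK
  set k' := a+(ℓ-1)*(b-1) with hk'
  set L : Set (ℕ × ℕ) := lockedCells ℓ lam with hLdef
  set U1 : Set (ℕ × ℕ) := {x ∈ Uset ℓ lam K | 2 ≤ x.1 ∧ (x.1-1, x.2) ∉ L} with hU1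
  set U2 : Set (ℕ × ℕ) := {x ∈ Uset ℓ lam K | a+1 < x.1 ∧ ¬(2 ≤ x.1 ∧ (x.1-1,x.2) ∉ L)} with hU2
  set N : Set (ℕ × ℕ) := {x ∈ Uset ℓ lam K | x.1 ≤ a+1 ∧ ¬(2 ≤ x.1 ∧ (x.1-1,x.2) ∉ L)} with hN
  have hUfin := Uset_finite (ℓ := ℓ) (lam := lam)
  have hU1fin : U1.Finite := (hUfin K).subset (fun x hx => hx.1)
  have hU2fin : U2.Finite := (hUfin K).subset (fun x hx => hx.1)
  have hNfin : N.Finite := (hUfin K).subset (fun x hx => hx.1)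
  have hDfin := Dset_finite (lam := lam) hℓ K (a+1)
  have cover : Uset ℓ lam K ⊆ U1 ∪ (U2 ∪ N) := by
    intro x hx
    by_cases h1 : 2 ≤ x.1 ∧ (x.1-1, x.2) ∉ L
    · exact Or.inl ⟨hx, h1⟩
    · by_cases h2 : a+1 < x.1
      · exact Or.inr (Or.inl ⟨hx, h2, h1⟩)
      · exact Or.inr (Or.inr ⟨hx, by omega, h1⟩)
  have hcard1 : (Uset ℓ lam K).ncard ≤ U1.ncard + (U2.ncard + N.ncard) := by
    calc (Uset ℓ lam K).ncard ≤ (U1 ∪ (U2 ∪ N)).ncard :=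
          Set.ncard_le_ncard cover ((hU1fin.union (hU2fin.union hNfin)))
    _ ≤ U1.ncard + (U2 ∪ N).ncard := Set.ncard_union_le _ _
    _ ≤ U1.ncard + (U2.ncard + N.ncard) := by
        have := Set.ncard_union_le U2 N
        omega
  -- shift map
  set φ : ℕ × ℕ → ℕ × ℕ := fun x => (x.1 - 1, x.2) with hφ
  have himg : φ '' U1 ⊆ Uset ℓ lam k' := by
    rintro y ⟨x, ⟨⟨⟨hxc, hxLP⟩, hxnl⟩, hx2, hxup⟩, rfl⟩
    obtain ⟨h1, h2, h3⟩ := LP_dest hxLP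
    refine ⟨⟨?_, ?_⟩, hxup⟩
    · obtain ⟨n, hn⟩ : ∃ n, x.1 = n + 1 := ⟨x.1 - 1, by omega⟩
      have hxc' : (n + 1, x.2) ∈ lam.cells := by
        rw [← hn]
        have : ((x.1, x.2) : ℕ × ℕ) = x := rfl
        rw [this]; exact hxc
      have hcc := cells_up (by omega) hxc'
      show (x.1 - 1, x.2) ∈ lam.cells
      have : x.1 - 1 = n := by omega
      rw [this]; exact hcc
    · exact LP_intro (by omega) h2 (by omega)
  have hinj : Set.InjOn φ U1 := by
    rintro x ⟨-, hx2, -⟩ y ⟨-, hy2, -⟩ hxy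
    obtain ⟨h1, h2⟩ := Prod.mk.inj hxy
    exact Prod.ext (by omega) h2
  have hU1card : U1.ncard ≤ (Uset ℓ lam k').ncard := by
    rw [← Set.ncard_image_of_injOn hinj]
    exact Set.ncard_le_ncard himg ((Uset_finite k'))
  have hU2sub : U2 ⊆ Dset ℓ lam K (a+1) := by
    rintro x ⟨⟨⟨hxc, hxLP⟩, hxnl⟩, hxgt, hxn⟩
    refine ⟨hxLP, hxgt, hxnl, ?_⟩
    have : ¬ ((x.1-1, x.2) ∉ L) := by
      intro hcon
      exact hxn ⟨by omega, hcon⟩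
    simpa using this
  have hU2card : U2.ncard ≤ (Dset ℓ lam K (a+1)).ncard :=
    Set.ncard_le_ncard hU2sub hDfin
  -- the new box
  rcases N.eq_empty_or_nonempty with hNe | ⟨x₀, hx₀⟩
  · rw [unlockedCount_eq, unlockedCount_eq]
    have : N.ncard = 0 := by rw [hNe]; simp
    omega
  · -- at most one new box
    have no_two : ∀ x x'' : ℕ × ℕ, x ∈ Uset ℓ lam K → x'' ∈ Uset ℓ lam K →
        x''.1 ≤ a + 1 → ¬(2 ≤ x''.1 ∧ (x''.1-1,x''.2) ∉ L) → x.1 < x''.1 → False := by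
      intro x x'' hx hx'' hle hnew hlt
      have hx''2 : 2 ≤ x''.1 := by have := hx.1.1.1; omega
      have hup : (x''.1-1, x''.2) ∈ L := by
        by_contra hcon
        exact hnew ⟨hx''2, hcon⟩
      obtain ⟨hcol, hrow⟩ := ladder_arith hℓ hx.1.2 hx''.1.2 hlt
      have hxeta : ((x.1, x.2) : ℕ × ℕ) = x := rfl
      have happ := Pstar_apply hℓ (c := x.1) (d := x.2) (f := x''.2) (g := a) (h := b)
        (by rw [hxeta]; exact hx.1.1) (by rw [hxeta]; exact hx.2)
        (hx''.1.2.2.1) hcol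
        (by rw [← hrow]; rw [show ((x''.1 - 1, x''.2) : ℕ × ℕ) = (x''.1 - 1, x''.2) from rfl]; exact hup)
        hb
        (by have h1 := (LP_dest hx.1.2).2.2; omega)
        (by omega)
      exact hq happ
    have hNsub : N ⊆ {x₀} := by
      intro x hx
      simp only [Set.mem_singleton_iff]
      by_contra hne
      have hxK : x ∈ Uset ℓ lam K := hx.1
      have hx₀K : x₀ ∈ Uset ℓ lam K := hx₀.1
      rcases lt_trichotomy x.1 x₀.1 with h | h | h
      · exact no_two x x₀ hxK hx₀K hx₀.2.1 hx₀.2.2 h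
      · exact hne (ladder_unique hℓ hxK.1.2 hx₀K.1.2 h)
      · exact no_two x₀ x hx₀K hxK hx.2.1 hx.2.2 h
    have hNcard : N.ncard ≤ 1 := by
      calc N.ncard ≤ ({x₀} : Set (ℕ × ℕ)).ncard := Set.ncard_le_ncard hNsub (Set.finite_singleton _)
      _ = 1 := Set.ncard_singleton _
    -- analyze x₀
    obtain ⟨⟨⟨hx₀c, hx₀LP⟩, hx₀nl⟩, hx₀le, hx₀new⟩ := hx₀
    have hx₀new' : x₀.1 = 1 ∨ (x₀.1 - 1, x₀.2) ∈ L := by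
      by_cases h1 : x₀.1 = 1
      · exact Or.inl h1
      · have h2 : 2 ≤ x₀.1 := by have := hx₀c.1; omega
        by_contra hcon
        push_neg at hcon
        exact hx₀new ⟨h2, hcon.2⟩
    have hncl := new_not_clear hx₀c hx₀nl hx₀new'
    have hx₀eta : ((x₀.1, x₀.2) : ℕ × ℕ) = x₀ := rfl
    obtain ⟨f, hf1, hfd, hfnc, hfmem⟩ := not_clear_failure (lam := lam) hℓ hncl
    set e := x₀.1 + (ℓ-1)*(x₀.2 - f) with he
    have hidxe : e + (ℓ-1)*(f-1) = K := by
      have hsplit : (ℓ-1)*(x₀.2-f) + (ℓ-1)*(f-1) = (ℓ-1)*(x₀.2-1) := mul_split _ _ _ _ (by omega)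
      have := (LP_dest hx₀LP).2.2
      omega
    have hege : x₀.1 + (ℓ-1) ≤ e := by
      have : (ℓ-1)*1 ≤ (ℓ-1)*(x₀.2-f) := Nat.mul_le_mul_left _ (by omega)
      omega
    by_cases hup : (e - 1, f) ∈ L
    · -- y = (e,f) is a D-position
      have hagt : a + 1 < e := by
        by_contra hcon
        push_neg at hcon
        have happ := Pstar_apply hℓ (c := x₀.1) (d := x₀.2) (f := f) (g := a) (h := b)
          (by rw [hx₀eta]; exact hx₀c) (by rw [hx₀eta]; exact hx₀nl) hf1 hfd
          (by rw [← he]; exact hup)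
          hb (by have := (LP_dest hx₀LP).2.2; omega) (by omega)
        exact hq happ
      set y : ℕ × ℕ := (e, f) with hy
      have hyD : y ∈ Dset ℓ lam K (a+1) := by
        refine ⟨LP_intro (by omega) (by omega) hidxe, by show a+1 < e; omega, ?_, ?_⟩
        · intro hcon
          exact hfnc (locked_cells hcon)
        · show (e - 1, f) ∈ L
          exact hup
      have hynU2 : y ∉ U2 := by
        intro hcon
        exact hfnc hcon.1.1.1
      have hcard2 : U2.ncard + 1 ≤ (Dset ℓ lam K (a+1)).ncard := by
        have h1 : insert y U2 ⊆ Dset ℓ lam K (a+1) := Set.insert_subset hyD hU2sub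
        have h2 : (insert y U2).ncard = U2.ncard + 1 := Set.ncard_insert_of_notMem hynU2 hU2fin
        calc U2.ncard + 1 = (insert y U2).ncard := h2.symm
        _ ≤ _ := Set.ncard_le_ncard h1 hDfin
      rw [unlockedCount_eq, unlockedCount_eq]
      omega
    · -- y = (e-1,f) is an unlocked box on the previous ladder
      set y : ℕ × ℕ := (e - 1, f) with hy
      have hyU : y ∈ Uset ℓ lam k' := by
        have hLP : (e - 1, f) ∈ LadderPositions ℓ k' := LP_intro (by omega) (by omega) (by omega)
        exact ⟨⟨hfmem, hLP⟩, hup⟩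
      have hynimg : y ∉ φ '' U1 := by
        rintro ⟨z, ⟨⟨hzc, -⟩, hz2, -⟩, hzeq⟩
        obtain ⟨h1, h2⟩ := Prod.mk.inj hzeq
        have hze : z = (e, f) := by
          have : z = (z.1, z.2) := rfl
          rw [this]
          have : z.1 = e := by omega
          rw [this, h2]
        rw [hze] at hzc
        exact hfnc hzc.1
      have hcard3 : U1.ncard + 1 ≤ (Uset ℓ lam k').ncard := by
        have h1 : insert y (φ '' U1) ⊆ Uset ℓ lam k' := Set.insert_subset hyU himg
        have h2 : (insert y (φ '' U1)).ncard = U1.ncard + 1 := by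
          rw [Set.ncard_insert_of_notMem hynimg (hU1fin.image φ),
            Set.ncard_image_of_injOn hinj]
        calc U1.ncard + 1 = (insert y (φ '' U1)).ncard := h2.symm
        _ ≤ _ := Set.ncard_le_ncard h1 (Uset_finite k')
      rw [unlockedCount_eq, unlockedCount_eq]
      omega

end S7
namespace S7
open YPartition

variable {ℓ : ℕ} {lam : YPartition}

lemma bsplit (hℓ : 2 < ℓ) {a b : ℕ} (ha : 1 ≤ a) (hb : 1 ≤ b) :
    ((LadderPositions ℓ (a+1+(ℓ-1)*(b-1)) ∩ {q | a+1 < q.1}) \ lockedCells ℓ lam).ncard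
      = ((LadderPositions ℓ (a+(ℓ-1)*(b-1)) ∩ {q | a < q.1}) \ lockedCells ℓ lam).ncard
        + (Dset ℓ lam (a+1+(ℓ-1)*(b-1)) (a+1)).ncard := by
  set K := a+1+(ℓ-1)*(b-1) with hK
  set k' := a+(ℓ-1)*(b-1) with hk'
  set L : Set (ℕ × ℕ) := lockedCells ℓ lam with hLdef
  set B : Set (ℕ×ℕ) := (LadderPositions ℓ K ∩ {q | a+1 < q.1}) \ L with hB
  set B' : Set (ℕ×ℕ) := (LadderPositions ℓ k' ∩ {q | a < q.1}) \ L with hB'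
  set D : Set (ℕ×ℕ) := Dset ℓ lam K (a+1) with hD
  set E : Set (ℕ×ℕ) := {x ∈ B | (x.1-1, x.2) ∉ L} with hE
  have hBfin : B.Finite := (LP_finite hℓ K).subset (fun x hx => hx.1.1)
  have hB'fin : B'.Finite := (LP_finite hℓ k').subset (fun x hx => hx.1.1)
  have hDfin : D.Finite := Dset_finite hℓ K (a+1)
  have hEfin : E.Finite := hBfin.subset (fun x hx => hx.1)
  have hBE : B = E ∪ D := by
    ext x
    constructor
    · intro hx
      by_cases hup : (x.1-1, x.2) ∈ L
      · exact Or.inr ⟨hx.1.1, hx.1.2, hx.2, hup⟩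
      · exact Or.inl ⟨hx, hup⟩
    · rintro (⟨hx, -⟩ | ⟨h1, h2, h3, h4⟩)
      · exact hx
      · exact ⟨⟨h1, h2⟩, h3⟩
  have hdisj : Disjoint E D := by
    rw [Set.disjoint_left]
    rintro x ⟨-, hup⟩ hd
    exact hup hd.2.2.2
  set φ : ℕ × ℕ → ℕ × ℕ := fun x => (x.1 - 1, x.2) with hφ
  have hEB' : φ '' E = B' := by
    apply Set.Subset.antisymm
    · rintro y ⟨x, ⟨⟨⟨hLP, hgt⟩, hnl⟩, hup⟩, rfl⟩
      obtain ⟨h1, h2, h3⟩ := LP_dest hLP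
      have hgt' : a + 1 < x.1 := hgt
      refine ⟨⟨LP_intro (by omega) h2 (by omega), ?_⟩, hup⟩
      show a < x.1 - 1
      omega
    · intro y hy
      obtain ⟨⟨hyLP, hygt⟩, hynl⟩ := hy
      obtain ⟨h1, h2, h3⟩ := LP_dest hyLP
      have hygt' : a < y.1 := hygt
      refine ⟨(y.1+1, y.2), ⟨⟨⟨LP_intro (by omega) h2 (by omega), ?_⟩, ?_⟩, ?_⟩, ?_⟩
      · show a + 1 < y.1 + 1
        omega
      · intro hcon
        apply hynl
        have hl : Locked ℓ lam (y.1, y.2) := locked_up hcon (by omega)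
        have : ((y.1, y.2) : ℕ × ℕ) = y := rfl
        rwa [this] at hl
      · show ((y.1+1-1, y.2) : ℕ × ℕ) ∉ L
        have : ((y.1+1-1, y.2) : ℕ × ℕ) = y := by
          have h4 : y.1 + 1 - 1 = y.1 := rfl
          rw [h4]
        rwa [this]
      · have : ((y.1+1-1, y.2) : ℕ × ℕ) = y := by
          have h4 : y.1 + 1 - 1 = y.1 := rfl
          rw [h4]
        exact this
  have hinj : Set.InjOn φ E := by
    rintro x ⟨⟨⟨-, hx2⟩, -⟩, -⟩ y ⟨⟨⟨-, hy2⟩, -⟩, -⟩ hxy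
    obtain ⟨h1, h2⟩ := Prod.mk.inj hxy
    have hx2' : a + 1 < x.1 := hx2
    have hy2' : a + 1 < y.1 := hy2
    exact Prod.ext (by omega) h2
  calc B.ncard = (E ∪ D).ncard := by rw [hBE]
  _ = E.ncard + D.ncard := Set.ncard_union_eq hdisj hEfin hDfin
  _ = B'.ncard + D.ncard := by rw [← hEB', Set.ncard_image_of_injOn hinj]

lemma S_mem {a b : ℕ} : (a,b) ∈ SCells ℓ lam ↔ (a,b) ∈ lockedCells ℓ lam ∨
    (1 ≤ a ∧ 1 ≤ b ∧ (a,b) ∉ lockedCells ℓ lam ∧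
      ((LadderPositions ℓ (a + (ℓ-1)*(b-1)) ∩ {q | a < q.1}) \ lockedCells ℓ lam).ncard
        < unlockedCount ℓ lam (a + (ℓ-1)*(b-1))) := Iff.rfl

lemma S_up (hℓ : 2 < ℓ) {a b : ℕ} (ha : 1 ≤ a) (h : (a+1, b) ∈ SCells ℓ lam) :
    (a, b) ∈ SCells ℓ lam := by
  rw [S_mem] at h ⊢
  rcases h with hL | ⟨h1, hb, hnl, hlt⟩
  · exact Or.inl (locked_up hL ha)
  · by_cases hqa : (a,b) ∈ lockedCells ℓ lam
    · exact Or.inl hqa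
    · refine Or.inr ⟨ha, hb, hqa, ?_⟩
      have hup := upcount hℓ ha hb hqa
      have hbs := bsplit (lam := lam) hℓ ha hb
      omega

lemma S_up_iter (hℓ : 2 < ℓ) {a b n : ℕ} (ha : 1 ≤ a) (h : (a+n, b) ∈ SCells ℓ lam) :
    (a, b) ∈ SCells ℓ lam := by
  induction n with
  | zero => exact h
  | succ n ih =>
      apply ih
      have h' : (a + n + 1, b) ∈ SCells ℓ lam := by
        rw [show a + n + 1 = a + (n+1) from by omega]
        exact h
      exact S_up hℓ (by omega) h'

lemma S_left (hℓ : 2 < ℓ) {a b : ℕ} (hb : 2 ≤ b) (h : (a,b) ∈ SCells ℓ lam) :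
    (a, b-1) ∈ SCells ℓ lam := by
  rw [S_mem] at h
  rcases h with hL | ⟨ha, -, hnl, hlt⟩
  · exact (S_mem).mpr (Or.inl (locked_left hL (by omega) (by omega)))
  · have hidxp' : (a + (ℓ-1)) + (ℓ-1)*(b-1-1) = a + (ℓ-1)*(b-1) := by
      have hsp : (ℓ-1)*1 + (ℓ-1)*(b-2) = (ℓ-1)*(b-1) := mul_split _ _ _ _ (by omega)
      rw [Nat.mul_one] at hsp
      have : b - 1 - 1 = b - 2 := by omega
      rw [this]
      omega
    by_cases hpl : (a + (ℓ-1), b-1) ∈ lockedCells ℓ lam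
    · exact (S_mem).mpr (Or.inl (locked_up_iter hpl ha))
    · by_cases hps : (a + (ℓ-1), b-1) ∈ SCells ℓ lam
      · exact S_up_iter hℓ ha hps
      · exfalso
        have hnotfill : unlockedCount ℓ lam (a + (ℓ-1)*(b-1)) ≤
            ((LadderPositions ℓ (a + (ℓ-1)*(b-1)) ∩ {q | a + (ℓ-1) < q.1})
              \ lockedCells ℓ lam).ncard := by
          by_contra hcon
          push_neg at hcon
          apply hps
          rw [S_mem]
          refine Or.inr ⟨by omega, by omega, hpl, ?_⟩
          rw [hidxp']
          exact hcon
        set L : Set (ℕ × ℕ) := lockedCells ℓ lam with hLdef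
        set k' := a + (ℓ-1)*(b-1) with hk'
        set Bsmall : Set (ℕ×ℕ) := (LadderPositions ℓ k' ∩ {q | a + (ℓ-1) < q.1}) \ L with hBs
        set Bbig : Set (ℕ×ℕ) := (LadderPositions ℓ k' ∩ {q | a < q.1}) \ L with hBb
        set p' : ℕ × ℕ := (a + (ℓ-1), b-1) with hp'
        have hp'B : p' ∈ Bbig := by
          refine ⟨⟨LP_intro (by omega) (by omega) hidxp', ?_⟩, hpl⟩
          show a < a + (ℓ-1)
          omega
        have hsub : insert p' Bsmall ⊆ Bbig := by
          apply Set.insert_subset hp'B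
          rintro x ⟨⟨hLP, hgt⟩, hnl'⟩
          have hgt' : a + (ℓ-1) < x.1 := hgt
          exact ⟨⟨hLP, by show a < x.1; omega⟩, hnl'⟩
        have hp'ns : p' ∉ Bsmall := by
          rintro ⟨⟨-, hgt⟩, -⟩
          have : a + (ℓ-1) < p'.1 := hgt
          have : p'.1 = a + (ℓ-1) := rfl
          omega
        have hBsfin : Bsmall.Finite := (LP_finite hℓ k').subset (fun x hx => hx.1.1)
        have hBbfin : Bbig.Finite := (LP_finite hℓ k').subset (fun x hx => hx.1.1)
        have hcard : Bsmall.ncard + 1 ≤ Bbig.ncard := by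
          calc Bsmall.ncard + 1 = (insert p' Bsmall).ncard :=
                (Set.ncard_insert_of_notMem hp'ns hBsfin).symm
          _ ≤ Bbig.ncard := Set.ncard_le_ncard hsub hBbfin
        omega

end S7
namespace S7
open YPartition

variable {ℓ : ℕ} {lam : YPartition}

lemma S_coords {p : ℕ × ℕ} (h : p ∈ SCells ℓ lam) : 1 ≤ p.1 ∧ 1 ≤ p.2 := by
  rcases h with hL | ⟨h1, h2, -⟩
  · have := cells_dest (locked_cells hL)
    exact ⟨this.1, this.2.1⟩
  · exact ⟨h1, h2⟩

lemma S_bound (hℓ : 2 < ℓ) : ∃ KK : ℕ, ∀ p ∈ SCells ℓ lam, p.1 ≤ KK ∧ p.2 ≤ KK := by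
  obtain ⟨N, hN⟩ := lam.eventually_zero
  refine ⟨N + (ℓ-1) * lam.part 1, ?_⟩
  have hcellbd : ∀ q ∈ lam.cells, q.1 < N ∧ q.2 ≤ lam.part 1 := by
    intro q hq
    obtain ⟨h1, h2, h3⟩ := cells_dest hq
    have hp1 : q.1 < N := by
      by_contra hcon
      push_neg at hcon
      rw [hN q.1 hcon] at h3
      omega
    exact ⟨hp1, h3.trans (lam.antitone 1 q.1 le_rfl h1)⟩
  intro p hp
  rcases hp with hL | ⟨h1, h2, -, hlt⟩
  · have hc := hcellbd p (locked_cells hL)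
    have hmm : 1 * lam.part 1 ≤ (ℓ-1) * lam.part 1 := Nat.mul_le_mul_right _ (by omega)
    omega
  · -- the ladder of p contains a cell
    have hupos : 0 < unlockedCount ℓ lam (ladderIdx ℓ p) := by omega
    rw [unlockedCount_eq] at hupos
    have hne : (Uset ℓ lam (ladderIdx ℓ p)).Nonempty :=
      Set.nonempty_of_ncard_ne_zero (by omega)
    obtain ⟨z, ⟨⟨hzc, hzLP⟩, -⟩⟩ := hne
    obtain ⟨hz1, hz2, hz3⟩ := LP_dest hzLP
    have hzb := hcellbd z hzc
    have hk : ladderIdx ℓ p ≤ N + (ℓ-1) * lam.part 1 := by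
      have hmm : (ℓ-1)*(z.2-1) ≤ (ℓ-1) * lam.part 1 := Nat.mul_le_mul_left _ (by omega)
      omega
    have hpLP : p.1 + (ℓ-1)*(p.2-1) = ladderIdx ℓ p := rfl
    have hp2bd : 1*(p.2-1) ≤ (ℓ-1)*(p.2-1) := Nat.mul_le_mul_right _ (by omega)
    omega

def Row (ℓ : ℕ) (lam : YPartition) (a : ℕ) : Set ℕ := {b | (a, b) ∈ SCells ℓ lam}

lemma Row_finite (hℓ : 2 < ℓ) (a : ℕ) : (Row ℓ lam a).Finite := by
  obtain ⟨KK, hKK⟩ := S_bound (lam := lam) hℓ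
  apply (Set.finite_Icc 1 KK).subset
  intro b hb
  have h1 := S_coords hb
  have h2 := hKK _ hb
  simp only [Set.mem_Icc]
  exact ⟨h1.2, h2.2⟩

lemma S_left_iter (hℓ : 2 < ℓ) {a b c : ℕ} (h1 : 1 ≤ c) (h2 : c ≤ b)
    (h : (a, b) ∈ SCells ℓ lam) : (a, c) ∈ SCells ℓ lam := by
  obtain ⟨n, rfl⟩ : ∃ n, b = c + n := ⟨b - c, by omega⟩
  clear h2
  induction n with
  | zero => exact h
  | succ n ih =>
      apply ih
      have hs := S_left hℓ (a := a) (b := c + (n+1)) (by omega) h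
      rw [show c + (n+1) - 1 = c + n from by omega] at hs
      exact hs

lemma Row_eq_Icc (hℓ : 2 < ℓ) (a : ℕ) : Row ℓ lam a = Set.Icc 1 (Row ℓ lam a).ncard := by
  rcases (Row ℓ lam a).eq_empty_or_nonempty with he | hne
  · rw [he]
    simp
  · have hfin := Row_finite (lam := lam) hℓ a
    obtain ⟨b0, hb0⟩ := hne
    have hne' : hfin.toFinset.Nonempty := ⟨b0, hfin.mem_toFinset.mpr hb0⟩
    set M := hfin.toFinset.max' hne' with hM
    have hMmem : M ∈ Row ℓ lam a := hfin.mem_toFinset.mp (hfin.toFinset.max'_mem hne')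
    have hmax : ∀ b ∈ Row ℓ lam a, b ≤ M :=
      fun b hb => hfin.toFinset.le_max' b (hfin.mem_toFinset.mpr hb)
    have hIcc : Row ℓ lam a = Set.Icc 1 M := by
      apply Set.Subset.antisymm
      · intro b hb
        exact Set.mem_Icc.mpr ⟨(S_coords hb).2, hmax b hb⟩
      · intro b hb
        rw [Set.mem_Icc] at hb
        exact S_left_iter hℓ hb.1 hb.2 hMmem
    have hcard : (Row ℓ lam a).ncard = M := by
      rw [hIcc, ← Finset.coe_Icc, Set.ncard_coe_finset, Nat.card_Icc]
      omega
    rw [hcard, hIcc]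

/-- The assembled partition. -/
noncomputable def SPart (ℓ : ℕ) (lam : YPartition) (hℓ : 2 < ℓ) : YPartition where
  part := fun a => (Row ℓ lam a).ncard
  zero_at_zero := by
    show (Row ℓ lam 0).ncard = 0
    have : Row ℓ lam 0 = ∅ := by
      ext b
      simp only [Set.mem_empty_iff_false, iff_false]
      intro hb
      have := (S_coords hb).1
      omega
    rw [this]
    simp
  antitone := by
    intro i j hi hij
    apply Set.ncard_le_ncard _ (Row_finite hℓ i)
    intro b hb
    have : (i + (j - i), b) ∈ SCells ℓ lam := by
      rw [show i + (j-i) = j from by omega]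
      exact hb
    exact S_up_iter hℓ hi this
  eventually_zero := by
    obtain ⟨KK, hKK⟩ := S_bound (lam := lam) hℓ
    refine ⟨KK + 1, fun i hi => ?_⟩
    show (Row ℓ lam i).ncard = 0
    have : Row ℓ lam i = ∅ := by
      ext b
      simp only [Set.mem_empty_iff_false, iff_false]
      intro hb
      have := (hKK _ hb).1
      omega
    rw [this]
    simp

end S7

open YPartition
/-- for every partition `λ`, the diagram `Sλ` obtained by moving all unlocked
boxes down their ladders is the Young diagram of a partition. -/
theorem statement7 (ℓ : ℕ) (hℓ : 2 < ℓ) (lam : YPartition) :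
    ∃ mu : YPartition, mu.cells = SCells ℓ lam := by
  refine ⟨S7.SPart ℓ lam hℓ, ?_⟩
  ext ⟨p1, p2⟩
  constructor
  · rintro ⟨h1, h2, h3⟩
    have hmem : p2 ∈ Set.Icc 1 ((S7.Row ℓ lam p1).ncard) := Set.mem_Icc.mpr ⟨h2, h3⟩
    rw [← S7.Row_eq_Icc hℓ p1] at hmem
    exact hmem
  · intro h
    have hco := S7.S_coords h
    have hrow : p2 ∈ S7.Row ℓ lam p1 := h
    rw [S7.Row_eq_Icc hℓ p1] at hrow
    exact ⟨hco.1, hco.2, (Set.mem_Icc.mp hrow).2⟩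
end
end

section
/- Fix an integer ℓ > 2. If λ is an (ℓ,0)-JM partition, then for every residue i with 0 ≤ i < ℓ, no ladder contains both a removable i-box of λ and an addable i-box of λ with the removable box in a row strictly above the addable box. -/
noncomputable section

open YPartition

/-!
Let `(a,b)` be the removable box and `(c,d)` the addable box, `a < c`. On a common ladder
`c - a = (ℓ-1)(b-d)`, so `d < b`, and the hook of `(a,d)` is `(b-d) + (c-a) = ℓ(b-d)`, while the
hook of `(a,b)` is `1`. The JM condition then forces every hook in column `d` to be divisible by
`ℓ`. These hooks strictly decrease down the column, so the `c - a` hooks in rows `a, …, c-1` are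
distinct positive multiples of `ℓ`, all at most `ℓ(b-d)`: hence `c - a ≤ b - d`, which contradicts
`c - a = (ℓ-1)(b-d)` once `ℓ > 2`.
-/

theorem add_le_of_dvd_of_lt {ℓ u v : ℕ} (hu : ℓ ∣ u) (hv : ℓ ∣ v) (huv : u < v) : u + ℓ ≤ v := by
  have := Nat.le_of_dvd (Nat.sub_pos_of_lt huv) (Nat.dvd_sub hv hu)
  omega

theorem mul_le_of_strictAntiOn_of_dvd {f : ℕ → ℕ} {ℓ a m : ℕ} (ham : a ≤ m)
    (hanti : StrictAntiOn f (Set.Icc a m)) (hdvd : ∀ x ∈ Set.Icc a m, ℓ ∣ f x) (hpos : 0 < f m) :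
    ℓ * (m + 1 - a) ≤ f a := by
  refine Nat.decreasingInduction (motive := fun x _ => a ≤ x → ℓ * (m + 1 - x) ≤ f x)
    (fun x hxm ih hax => ?_) (fun _ => ?_) ham le_rfl
  · have hstep : f (x + 1) + ℓ ≤ f x :=
      add_le_of_dvd_of_lt (hdvd _ ⟨by omega, hxm⟩) (hdvd _ ⟨hax, hxm.le⟩)
        (hanti ⟨hax, hxm.le⟩ ⟨by omega, hxm⟩ (Nat.lt_succ_self x))
    calc ℓ * (m + 1 - x) = ℓ * (m + 1 - (x + 1)) + ℓ := by
          rw [← Nat.mul_add_one]; congr 1; omega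
      _ ≤ f x := by have := ih (by omega); omega
  · simpa using Nat.le_of_dvd hpos (hdvd m ⟨ham, le_rfl⟩)

namespace YPartition

variable {μ : YPartition}

theorem le_colLen_of_mem_cells {x n : ℕ} (h : (x, n) ∈ μ.cells) : x ≤ μ.colLen n := by
  obtain ⟨hx, hn, hnx⟩ := h
  obtain ⟨N, hN⟩ := μ.eventually_zero
  have hsub : Set.Icc 1 x ⊆ {a : ℕ | 1 ≤ a ∧ n ≤ μ.part a} :=
    fun a ⟨ha, hax⟩ => ⟨ha, hnx.trans (μ.antitone a x ha hax)⟩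
  have hfin : {a : ℕ | 1 ≤ a ∧ n ≤ μ.part a}.Finite := by
    refine (Set.finite_Iio N).subset fun a ⟨_, hna⟩ => ?_
    by_contra hNa
    have := hN a (not_lt.mp hNa)
    omega
  rw [colLen, Nat.card_coe_set_eq]
  simpa using Set.ncard_le_ncard hsub hfin

theorem colLen_le_of_part_lt {m n : ℕ} (h : μ.part (m + 1) < n) : μ.colLen n ≤ m := by
  have hsub : {a : ℕ | 1 ≤ a ∧ n ≤ μ.part a} ⊆ Set.Icc 1 m := by
    refine fun a ⟨ha, hna⟩ => ⟨ha, ?_⟩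
    by_contra! hma
    have := μ.antitone (m + 1) a (by omega) hma
    omega
  rw [colLen, Nat.card_coe_set_eq]
  simpa using Set.ncard_le_ncard hsub

theorem Removable.colLen_eq {a b : ℕ} (h : Removable μ (a, b)) : μ.colLen b = a :=
  le_antisymm (colLen_le_of_part_lt h.2.2)
    (le_colLen_of_mem_cells ⟨h.1, by have := h.2.2; omega, h.2.1.le⟩)

theorem Removable.hook_eq_one {a b : ℕ} (h : Removable μ (a, b)) : μ.hook a b = 1 := by
  have hb : b = μ.part a := h.2.1
  rw [hook, h.colLen_eq, ← hb]
  simp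

theorem Addable.mem_cells {c d x : ℕ} (h : Addable μ (c, d)) (hx : 1 ≤ x) (hxc : x < c) :
    (x, d) ∈ μ.cells := by
  obtain ⟨-, hd, hprev⟩ := h
  dsimp only at hd hprev
  refine ⟨hx, by omega, ?_⟩
  rcases hprev with rfl | hprev
  · omega
  · exact hprev.trans (μ.antitone x (c - 1) hx (by omega))

theorem Addable.colLen_eq {c d : ℕ} (h : Addable μ (c, d)) : μ.colLen d = c - 1 := by
  refine le_antisymm (colLen_le_of_part_lt ?_) ?_
  · rw [Nat.sub_add_cancel h.1]
    have := h.2.1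
    dsimp only at this ⊢
    omega
  · rcases Nat.lt_or_ge (c - 1) 1 with hc | hc
    · omega
    · exact le_colLen_of_mem_cells (h.mem_cells hc (by omega))

theorem hook_lt_hook_of_lt {x y n : ℕ} (hx : 1 ≤ x) (hxy : x < y) (hy : (y, n) ∈ μ.cells) :
    μ.hook y n < μ.hook x n := by
  have := le_colLen_of_mem_cells hy
  have := μ.antitone x y hx hxy.le
  simp only [hook]
  omega

theorem IsJM.dvd_hook {ℓ a b y x : ℕ} (hJM : IsJM ℓ μ) (hab : (a, b) ∈ μ.cells)
    (hay : (a, y) ∈ μ.cells) (hxb : (x, b) ∈ μ.cells) (hdvd : ℓ ∣ μ.hook a b)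
    (hndvd : ¬ ℓ ∣ μ.hook a y) : ℓ ∣ μ.hook x b := by
  by_contra h
  exact hJM ⟨a, b, y, x, hab, hay, hxb, hdvd, hndvd, h⟩

theorem SameLadder.eq_add_mul {ℓ : ℕ} {p q : ℕ × ℕ} (hℓ : 0 < ℓ) (h : SameLadder ℓ p q)
    (hpq : p.1 < q.1) : q.2 < p.2 ∧ q.1 = p.1 + (ℓ - 1) * (p.2 - q.2) := by
  unfold SameLadder at h
  have hlt : q.2 < p.2 := by
    by_contra! hle
    have : ((ℓ : ℤ) - 1) * ((p.2 : ℤ) - q.2) ≤ 0 :=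
      mul_nonpos_of_nonneg_of_nonpos (by omega) (by omega)
    omega
  refine ⟨hlt, ?_⟩
  zify [hℓ, hlt.le]
  linarith

end YPartition

/-- if `λ` is an `(ℓ,0)`-JM partition, then no ladder contains a removable
`i`-box strictly above an addable `i`-box. -/
theorem statement11 (ℓ : ℕ) (hℓ : 2 < ℓ) (lam : YPartition) (hJM : IsJM ℓ lam) :
    ∀ i : ℕ, i < ℓ →
      ¬ ∃ p q : ℕ × ℕ, p ∈ RemovableRes ℓ i lam ∧ q ∈ AddableRes ℓ i lam ∧
        SameLadder ℓ p q ∧ p.1 < q.1 := by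
  rintro i - ⟨⟨a, b⟩, ⟨c, d⟩, ⟨hp, -⟩, ⟨hq, -⟩, hlad, hac⟩
  obtain ⟨hdb, hc⟩ := hlad.eq_add_mul (by omega) hac
  dsimp only at hdb hc hac
  have hpart_a : lam.part a = b := hp.2.1.symm
  have hcell : ∀ x ∈ Set.Icc a (c - 1), (x, d) ∈ lam.cells := fun x hx =>
    hq.mem_cells (hp.1.trans hx.1) (by have := hx.2; omega)
  have hhook_ad : lam.hook a d = ℓ * (b - d) := by
    have hmul : ℓ * (b - d) = (ℓ - 1) * (b - d) + (b - d) := by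
      rw [Nat.sub_one_mul, Nat.sub_add_cancel (Nat.le_mul_of_pos_left _ (by omega))]
    rw [hook, hq.colLen_eq, hpart_a, hmul]
    omega
  have hcol : ∀ x ∈ Set.Icc a (c - 1), ℓ ∣ lam.hook x d := fun x hx =>
    hJM.dvd_hook (hcell a ⟨le_rfl, by omega⟩) ⟨hp.1, by omega, hpart_a.ge⟩ (hcell x hx)
      (hhook_ad ▸ dvd_mul_right ℓ _) (by rw [hp.hook_eq_one, Nat.dvd_one]; omega)
  have hrun := mul_le_of_strictAntiOn_of_dvd (f := fun x => lam.hook x d) (by omega)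
    (fun x hx y hy hxy => hook_lt_hook_of_lt (hp.1.trans hx.1) hxy (hcell y hy))
    hcol (by simp [hook])
  have hba : c - a ≤ b - d := by
    rw [hhook_ad, show c - 1 + 1 - a = c - a by omega] at hrun
    exact Nat.le_of_mul_le_mul_left hrun (by omega)
  have htwice : 2 * (b - d) ≤ (ℓ - 1) * (b - d) := Nat.mul_le_mul_right _ (by omega)
  omega
end
end
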